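/- arXiv:1603.08184 — 7 statements merged into one kernel-verified Lean document; each statement's English description precedes it below -/
import Mathlib

section
/- Let n ≥ 3 and let H be a subgroup of the multiplicative group (ℤ/2^nℤ)^* of units of ℤ/2^nℤ. Then one of the following holds: (i) H is cyclic, and if |H| = 2^a then 0 ≤ a ≤ n−2 and H is generated by the residue class of 1+2^{n−a}, or by the residue class of −1+2^{n−a}, or H is generated by −1 (in which case a ≤ 1); (ii) there exists a with 1 ≤ a ≤ n−2 such that H is generated by the two elements −1 and 1+2^{n−a}, the element −1 does not lie in the cyclic subgroup generated by 1+2^{n−a}, and |H| = 2^{a+1}. -/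
/-!
Reduction mod `4` gives a character `ε : (ZMod (2 ^ n))ˣ →* ℤˣ`; its kernel `U`, the units
`≡ 1 [MOD 4]`, has index `2`, hence order `2 ^ (n - 2)`, and is cyclic, generated by `5`. Since
`1 + 2 ^ k * t` (`t` odd) has order `2 ^ (n - k)`, the subgroup of `U` of order `2 ^ a` is generated
by `1 + 2 ^ (n - a)` and also by `1 - 2 ^ (n - a)`.

If `-1 ∈ H`, then `H = (H ⊓ U) ∪ -(H ⊓ U)`. If `-1 ∉ H`, then `x ↦ ε x • x` embeds `H` into `U`,
with image the subgroup of order `|H| = 2 ^ a`. Either `1 + 2 ^ (n - a)` lies in `H` and generates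
it, or the preimage of `1 - 2 ^ (n - a)` is `-1 + 2 ^ (n - a)`, which then generates `H`.
-/

open Subgroup

section Cyclic

variable {G : Type*} [Group G]

theorem IsCyclic.subgroup_eq_of_card_eq [Finite G] [IsCyclic G] {K L : Subgroup G}
    (h : Nat.card K = Nat.card L) : K = L := by
  classical
  have := Fintype.ofFinite G
  have hS : ∀ d > 0, {x : G | x ^ d = 1}.ncard ≤ d := fun d hd => by
    rw [Set.ncard_eq_toFinset_card']
    simpa using IsCyclic.card_pow_eq_one_le (α := G) hd
  have hsub : ∀ M : Subgroup G, (M : Set G) = {x | x ^ Nat.card M = 1} := fun M =>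
    Set.eq_of_subset_of_ncard_le
      (fun x hx => congrArg Subtype.val (pow_card_eq_one' (G := M) (x := ⟨x, hx⟩)))
      ((hS _ Nat.card_pos).trans_eq (Nat.card_coe_set_eq (M : Set G)).symm)
      (Set.toFinite _)
  exact SetLike.coe_injective (by rw [hsub K, hsub L, h])

theorem Subgroup.eq_of_card_eq_of_le_of_isCyclic {C K L : Subgroup G} [Finite C] [IsCyclic C]
    (hK : K ≤ C) (hL : L ≤ C) (h : Nat.card K = Nat.card L) : K = L := by
  have hcard : Nat.card (K.subgroupOf C) = Nat.card (L.subgroupOf C) := by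
    rwa [Nat.card_congr (subgroupOfEquivOfLe hK).toEquiv,
      Nat.card_congr (subgroupOfEquivOfLe hL).toEquiv]
  have := IsCyclic.subgroup_eq_of_card_eq hcard
  rwa [subgroupOf_inj, inf_of_le_left hK, inf_of_le_left hL] at this

theorem Subgroup.card_eq_two_mul_card_inf {U H : Subgroup G} [U.Normal] (hU : U.index = 2)
    (hH : ¬H ≤ U) : Nat.card H = 2 * Nat.card ↥(H ⊓ U) := by
  have hrel : U.relIndex H = 2 :=
    ((Nat.dvd_prime Nat.prime_two).mp (hU ▸ relIndex_dvd_index_of_normal U H)).resolve_left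
      (mt relIndex_eq_one.mp hH)
  rw [← relIndex_bot_left, ← relIndex_mul_relIndex _ _ _ bot_le inf_le_left, inf_relIndex_left,
    relIndex_bot_left, hrel, mul_comm]

end Cyclic

namespace ZMod

variable {n : ℕ}

theorem orderOf_one_add_two_pow_mul {k : ℕ} (hk : 2 ≤ k) (hkn : k ≤ n) {t : ℤ} (ht : Odd t) :
    orderOf (1 + 2 ^ k * t : ZMod (2 ^ n)) = 2 ^ (n - k) := by
  obtain ⟨d, rfl⟩ := Nat.exists_eq_add_of_le' hkn
  rw [Nat.add_sub_cancel]
  exact_mod_cast orderOf_one_add_mul_prime_pow Nat.prime_two k (by omega) (by omega) t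
    (by rwa [Nat.cast_ofNat, ← even_iff_two_dvd, Int.not_even_iff_odd]) d

theorem exists_unit_eq_one_add_two_pow_mul {k : ℕ} (hk : 2 ≤ k) (hkn : k ≤ n) {t : ℤ}
    (ht : Odd t) :
    ∃ u : (ZMod (2 ^ n))ˣ, (u : ZMod (2 ^ n)) = 1 + 2 ^ k * t ∧ orderOf u = 2 ^ (n - k) := by
  have h := orderOf_one_add_two_pow_mul hk hkn ht
  have hfin : IsOfFinOrder (1 + 2 ^ k * t : ZMod (2 ^ n)) :=
    orderOf_pos_iff.mp (h ▸ by positivity)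
  exact ⟨hfin.unit, rfl, by rw [← orderOf_units, IsOfFinOrder.val_unit, h]⟩

/-- The sign `ε = ±1` with `x ≡ ε [MOD 4]`. -/
def twoPowSign (hn : 2 ≤ n) : (ZMod (2 ^ n))ˣ →* ℤˣ :=
  χ₄.toUnitHom.comp (unitsMap (Nat.pow_dvd_pow 2 hn))

/-- The representative of `±x` that is `≡ 1 [MOD 4]`. -/
def twoPowAbs (hn : 2 ≤ n) : (ZMod (2 ^ n))ˣ →* (ZMod (2 ^ n))ˣ :=
  MonoidHom.id _ * (Units.map (Int.castRingHom (ZMod (2 ^ n))).toMonoidHom).comp (twoPowSign hn)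

section

variable (hn : 2 ≤ n)

theorem twoPowSign_neg_one : twoPowSign hn (-1) = -1 := by
  have : unitsMap (Nat.pow_dvd_pow 2 hn) (-1 : (ZMod (2 ^ n))ˣ) = -1 := by
    ext; simp [unitsMap]
  rw [twoPowSign, MonoidHom.comp_apply, this]
  decide

theorem twoPowSign_neg (x : (ZMod (2 ^ n))ˣ) : twoPowSign hn (-x) = -twoPowSign hn x := by
  rw [← neg_one_mul, map_mul, twoPowSign_neg_one, neg_one_mul]

theorem twoPowSign_eq_one {k : ℕ} (hk : 2 ≤ k) {x : (ZMod (2 ^ n))ˣ} {t : ZMod (2 ^ n)}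
    (hx : (x : ZMod (2 ^ n)) = 1 + 2 ^ k * t) : twoPowSign hn x = 1 := by
  have h4 : (2 : ZMod 4) ^ k = 0 := by
    obtain ⟨j, rfl⟩ := Nat.exists_eq_add_of_le' hk
    rw [pow_add, show (2 : ZMod 4) ^ 2 = 0 by decide, mul_zero]
  have : unitsMap (Nat.pow_dvd_pow 2 hn) x = 1 := by
    ext
    change castHom (Nat.pow_dvd_pow 2 hn) (ZMod 4) (x : ZMod (2 ^ n)) = 1
    rw [hx, map_add, map_mul, map_pow, map_one, map_ofNat, h4, zero_mul, add_zero]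
  rw [twoPowSign, MonoidHom.comp_apply, this, map_one]

theorem neg_one_notMem_ker_twoPowSign : (-1 : (ZMod (2 ^ n))ˣ) ∉ (twoPowSign hn).ker := by
  rw [MonoidHom.mem_ker, twoPowSign_neg_one]
  decide

theorem mem_ker_twoPowSign_or_neg_mem (x : (ZMod (2 ^ n))ˣ) :
    x ∈ (twoPowSign hn).ker ∨ -x ∈ (twoPowSign hn).ker := by
  simp only [MonoidHom.mem_ker, twoPowSign_neg, neg_eq_iff_eq_neg]
  exact Int.units_eq_one_or _

theorem index_ker_twoPowSign : (twoPowSign hn).ker.index = 2 := by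
  have hsurj : Function.Surjective (twoPowSign hn) := fun s =>
    (Int.units_eq_one_or s).elim (fun h => ⟨1, by rw [h, map_one]⟩)
      (fun h => ⟨-1, by rw [h, twoPowSign_neg_one]⟩)
  rw [Subgroup.index_ker, MonoidHom.range_eq_top.mpr hsurj, card_top, Nat.card_eq_fintype_card,
    Fintype.card_units_int]

theorem card_ker_twoPowSign : Nat.card (twoPowSign hn).ker = 2 ^ (n - 2) := by
  have h := card_mul_index (twoPowSign hn).ker
  rw [index_ker_twoPowSign, Nat.card_eq_fintype_card (α := (ZMod (2 ^ n))ˣ),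
    ZMod.card_units_eq_totient, Nat.totient_prime_pow Nat.prime_two (by omega),
    show n - 1 = n - 2 + 1 by omega] at h
  simpa [pow_succ] using h

theorem isCyclic_ker_twoPowSign : IsCyclic (twoPowSign hn).ker := by
  obtain ⟨c, hc, hco⟩ := exists_unit_eq_one_add_two_pow_mul le_rfl hn odd_one
  have hcK : c ∈ (twoPowSign hn).ker := twoPowSign_eq_one hn le_rfl hc
  refine isCyclic_of_orderOf_eq_card ⟨c, hcK⟩ ?_
  rw [Subgroup.orderOf_mk, hco, card_ker_twoPowSign]

theorem eq_zpowers_of_le_ker_twoPowSign {K : Subgroup (ZMod (2 ^ n))ˣ}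
    (hK : K ≤ (twoPowSign hn).ker) {u : (ZMod (2 ^ n))ˣ} (hu : u ∈ (twoPowSign hn).ker)
    (h : Nat.card K = orderOf u) : K = zpowers u :=
  have := isCyclic_ker_twoPowSign hn
  eq_of_card_eq_of_le_of_isCyclic hK (zpowers_le.mpr hu) (by rw [Nat.card_zpowers, h])

theorem exists_card_eq_two_pow_of_le_ker_twoPowSign {K : Subgroup (ZMod (2 ^ n))ˣ}
    (hK : K ≤ (twoPowSign hn).ker) : ∃ a ≤ n - 2, Nat.card K = 2 ^ a :=
  (Nat.dvd_prime_pow Nat.prime_two).mp (card_ker_twoPowSign hn ▸ card_dvd_of_le hK)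

theorem twoPowAbs_eq_self_or_neg (x : (ZMod (2 ^ n))ˣ) :
    twoPowAbs hn x = x ∨ twoPowAbs hn x = -x := by
  rcases Int.units_eq_one_or (twoPowSign hn x) with h | h <;> simp [twoPowAbs, h]

theorem twoPowAbs_mem_ker (x : (ZMod (2 ^ n))ˣ) : twoPowAbs hn x ∈ (twoPowSign hn).ker := by
  rcases Int.units_eq_one_or (twoPowSign hn x) with h | h <;>
    simp [twoPowAbs, h, twoPowSign_neg]

theorem injective_twoPowAbs_comp_subtype {H : Subgroup (ZMod (2 ^ n))ˣ} (hH : -1 ∉ H) :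
    Function.Injective ((twoPowAbs hn).comp H.subtype) := by
  refine (injective_iff_map_eq_one _).mpr fun ⟨x, hx⟩ h => ?_
  change twoPowAbs hn x = 1 at h
  rcases twoPowAbs_eq_self_or_neg hn x with h' | h'
  · exact Subtype.ext (h'.symm.trans h)
  · exact absurd (neg_eq_iff_eq_neg.mp (h'.symm.trans h) ▸ hx) hH

end

theorem exists_eq_closure_of_neg_one_mem (hn : 2 ≤ n) {H : Subgroup (ZMod (2 ^ n))ˣ}
    (hH : -1 ∈ H) :
    ∃ a ≤ n - 2, ∃ g : (ZMod (2 ^ n))ˣ, (g : ZMod (2 ^ n)) = 1 + 2 ^ (n - a) ∧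
      H = Subgroup.closure {-1, g} ∧ Nat.card H = 2 ^ (a + 1) := by
  obtain ⟨a, ha, hKa⟩ := exists_card_eq_two_pow_of_le_ker_twoPowSign hn
    (inf_le_right : H ⊓ (twoPowSign hn).ker ≤ _)
  obtain ⟨g, hg, hgo⟩ :=
    exists_unit_eq_one_add_two_pow_mul (n := n) (k := n - a) (by omega) (by omega) odd_one
  rw [Int.cast_one, mul_one] at hg
  have hK : H ⊓ (twoPowSign hn).ker = zpowers g :=
    eq_zpowers_of_le_ker_twoPowSign hn inf_le_right
      (twoPowSign_eq_one hn (k := n - a) (by omega) (by rw [hg, mul_one]))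
      (by rw [hKa, hgo]; congr 1; omega)
  have hgH : g ∈ H := (inf_le_left : _ ≤ H) (hK ▸ mem_zpowers g)
  refine ⟨a, ha, g, hg, le_antisymm (fun x hx => ?_) (Subgroup.closure_le _ |>.mpr ?_), ?_⟩
  · have hg' : g ∈ Subgroup.closure {-1, g} := subset_closure (Set.mem_insert_of_mem _ rfl)
    have hneg : (-1 : (ZMod (2 ^ n))ˣ) ∈ Subgroup.closure {-1, g} :=
      subset_closure (Set.mem_insert _ _)
    rcases mem_ker_twoPowSign_or_neg_mem hn x with h | h
    · exact zpowers_le.mpr hg' (hK ▸ mem_inf.mpr ⟨hx, h⟩)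
    · have hxK : -x ∈ H ⊓ (twoPowSign hn).ker := mem_inf.mpr ⟨neg_one_mul x ▸ mul_mem hH hx, h⟩
      have := mul_mem hneg (zpowers_le.mpr hg' (hK ▸ hxK))
      rwa [neg_one_mul, neg_neg] at this
  · rintro x (rfl | rfl)
    exacts [hH, hgH]
  · rw [card_eq_two_mul_card_inf (index_ker_twoPowSign hn)
      (fun h => neg_one_notMem_ker_twoPowSign hn (h hH)), hKa, pow_succ']

theorem exists_eq_zpowers_of_neg_one_notMem (hn : 2 ≤ n) {H : Subgroup (ZMod (2 ^ n))ˣ}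
    (hH : -1 ∉ H) :
    ∃ a ≤ n - 2, Nat.card H = 2 ^ a ∧ ∃ u : (ZMod (2 ^ n))ˣ,
      ((u : ZMod (2 ^ n)) = 1 + 2 ^ (n - a) ∨ (u : ZMod (2 ^ n)) = -1 + 2 ^ (n - a)) ∧
        H = zpowers u := by
  set f := (twoPowAbs hn).comp H.subtype
  have hf := injective_twoPowAbs_comp_subtype hn hH
  have hfH : Nat.card f.range = Nat.card H :=
    (Nat.card_congr (MonoidHom.ofInjective hf).toEquiv).symm
  have hfK : f.range ≤ (twoPowSign hn).ker := by
    rintro _ ⟨x, rfl⟩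
    exact twoPowAbs_mem_ker hn x
  obtain ⟨a, ha, hfa⟩ := exists_card_eq_two_pow_of_le_ker_twoPowSign hn hfK
  have hna : n - (n - a) = a := by omega
  obtain ⟨g, hg, hgo⟩ :=
    exists_unit_eq_one_add_two_pow_mul (n := n) (k := n - a) (by omega) (by omega) odd_one
  obtain ⟨u, hu, huo⟩ := exists_unit_eq_one_add_two_pow_mul (n := n) (k := n - a) (by omega)
    (by omega) (t := -1) (by decide)
  have hfg : f.range = zpowers g := eq_zpowers_of_le_ker_twoPowSign hn hfK
    (twoPowSign_eq_one hn (k := n - a) (by omega) hg) (by rw [hfa, hgo, hna])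
  have hfu : f.range = zpowers u := eq_zpowers_of_le_ker_twoPowSign hn hfK
    (twoPowSign_eq_one hn (k := n - a) (by omega) hu) (by rw [hfa, huo, hna])
  have eq_zpowers : ∀ x ∈ H, orderOf x = 2 ^ a → H = zpowers x := fun x hx hxo =>
    (eq_of_le_of_card_ge (zpowers_le.mpr hx) (by rw [Nat.card_zpowers, hxo, ← hfa, hfH])).symm
  refine ⟨a, ha, hfH ▸ hfa, ?_⟩
  by_cases hgH : g ∈ H
  · exact ⟨g, Or.inl (by simpa using hg), eq_zpowers g hgH (by rw [hgo, hna])⟩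
  obtain ⟨⟨x, hxH⟩, hx⟩ : u ∈ f.range := hfu ▸ mem_zpowers u
  change twoPowAbs hn x = u at hx
  have hxo : orderOf x = 2 ^ a := by
    rw [← Subgroup.orderOf_mk x hxH, ← orderOf_injective f hf, ← hna, ← huo, ← hx]
    rfl
  rcases twoPowAbs_eq_self_or_neg hn x with h | h
  · refine absurd ?_ hgH
    rw [eq_zpowers x hxH hxo, ← h, hx, ← hfu, hfg]
    exact mem_zpowers g
  · refine ⟨x, Or.inr ?_, eq_zpowers x hxH hxo⟩
    rw [← neg_neg x, ← h, hx, Units.val_neg, hu]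
    push_cast
    ring

end ZMod

open ZMod

theorem subgroups_of_units_zmod_two_pow
    (n : ℕ) (hn : 3 ≤ n) (H : Subgroup (ZMod (2 ^ n))ˣ) :
    (IsCyclic H ∧
      ∀ a : ℕ, Nat.card H = 2 ^ a →
        a ≤ n - 2 ∧
          ((∃ u : (ZMod (2 ^ n))ˣ, (u : ZMod (2 ^ n)) = 1 + 2 ^ (n - a) ∧
              H = Subgroup.zpowers u) ∨
           (∃ u : (ZMod (2 ^ n))ˣ, (u : ZMod (2 ^ n)) = -1 + 2 ^ (n - a) ∧
              H = Subgroup.zpowers u) ∨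
           (H = Subgroup.zpowers (-1 : (ZMod (2 ^ n))ˣ) ∧ a ≤ 1))) ∨
    (∃ a : ℕ, 1 ≤ a ∧ a ≤ n - 2 ∧
      ∃ u : (ZMod (2 ^ n))ˣ, (u : ZMod (2 ^ n)) = 1 + 2 ^ (n - a) ∧
        H = Subgroup.closure {(-1 : (ZMod (2 ^ n))ˣ), u} ∧
        (-1 : (ZMod (2 ^ n))ˣ) ∉ Subgroup.zpowers u ∧
        Nat.card H = 2 ^ (a + 1)) := by
  have hn2 : 2 ≤ n := by omega
  have two_pow_inj : Function.Injective (2 ^ · : ℕ → ℕ) := Nat.pow_right_injective le_rfl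
  by_cases hH : (-1 : (ZMod (2 ^ n))ˣ) ∈ H
  · obtain ⟨a, ha, g, hg, hHg, hcard⟩ := exists_eq_closure_of_neg_one_mem hn2 hH
    rcases Nat.eq_zero_or_pos a with rfl | ha0
    · have hg1 : g = 1 := Units.ext <| by
        have h0 : ((2 ^ n : ℕ) : ZMod (2 ^ n)) = 0 := natCast_self _
        push_cast at h0
        rw [hg, Nat.sub_zero, h0, add_zero, Units.val_one]
      have hH' : H = zpowers (-1) := by
        rw [hHg, hg1, Set.pair_comm, closure_insert_one, zpowers_eq_closure]
      refine Or.inl ⟨by rw [hH']; infer_instance, fun b hb => ?_⟩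
      obtain rfl : b = 1 := two_pow_inj (hb.symm.trans hcard)
      exact ⟨by omega, Or.inr (Or.inr ⟨hH', le_rfl⟩)⟩
    · have hgK : g ∈ (twoPowSign hn2).ker :=
        twoPowSign_eq_one hn2 (k := n - a) (by omega) (by rw [hg, mul_one])
      exact Or.inr ⟨a, ha0, ha, g, hg, hHg,
        fun h => neg_one_notMem_ker_twoPowSign hn2 (zpowers_le.mpr hgK h), hcard⟩
  · obtain ⟨a, ha, hcard, u, hu, hHu⟩ := exists_eq_zpowers_of_neg_one_notMem hn2 hH
    refine Or.inl ⟨by rw [hHu]; infer_instance, fun b hb => ?_⟩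
    obtain rfl : b = a := two_pow_inj (hb.symm.trans hcard)
    exact ⟨ha, hu.imp (fun h => ⟨u, h, hHu⟩) (fun h => Or.inl ⟨u, h, hHu⟩)⟩
end

section
/- Let n ≥ 3 and let G = ⟨A, C⟩ be a finite group generated by two elements A and C such that: the cyclic subgroup ⟨C⟩ has order 2^n, is normal in G, and is self-centralized in G (i.e., the centralizer of ⟨C⟩ in G is contained in ⟨C⟩); and A⁻¹CA = C^r where the residue class of r has multiplicative order 2^a modulo 2^n and r ≢ −1 (mod 2^n). Then |G| = 2^{n+a} and there exists an element A' ∈ G such that G = ⟨A', C⟩, A'⁻¹CA' = C^r, and A'^{2^a} = 1. -/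
/-- partial product `∏_{j<a} (1 + r^(2^j))`. -/
private def PP (r a : ℕ) : ℕ := ∏ j ∈ Finset.range a, (1 + r ^ (2 ^ j))

private lemma PP_zero (r : ℕ) : PP r 0 = 1 := by simp [PP]

private lemma PP_succ (r a : ℕ) : PP r (a + 1) = PP r a * (1 + r ^ (2 ^ a)) := by
  simp [PP, Finset.prod_range_succ]

private lemma geom (r : ℕ) (b : ℕ) : ((r : ℤ) - 1) * PP r b = (r : ℤ) ^ (2 ^ b) - 1 := by
  induction b with
  | zero => simp [PP_zero]
  | succ b ih =>
      have h2 : (2:ℕ) ^ (b+1) = 2 ^ b * 2 := by ring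
      rw [PP_succ, h2, pow_mul]
      push_cast
      push_cast at ih
      linear_combination ((r:ℤ) ^ (2^b) + 1) * ih

private lemma odd_one_add_sq (o : ℕ) (ho : Odd o) : ∃ M, Odd M ∧ 1 + o ^ 2 = 2 * M := by
  obtain ⟨c, rfl⟩ := ho
  exact ⟨2 * (c * c + c) + 1, odd_two_mul_add_one _, by ring⟩

private lemma PP_val (r w m' : ℕ) (hro : Odd r) (hw : r + 1 = 2 ^ w * m') (hm' : Odd m') :
    ∀ a, 1 ≤ a → ∃ M, Odd M ∧ PP r a = 2 ^ (w + (a - 1)) * M := by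
  intro a ha
  induction a, ha using Nat.le_induction with
  | base =>
      refine ⟨m', hm', ?_⟩
      simp [PP, hw, add_comm 1 r]
  | succ a ha ih =>
      obtain ⟨M, hM, hPM⟩ := ih
      have hodd : Odd (r ^ (2 ^ (a - 1))) := hro.pow
      obtain ⟨M2, hM2, hM2e⟩ := odd_one_add_sq _ hodd
      have h2a : r ^ (2 ^ a) = (r ^ (2 ^ (a-1))) ^ 2 := by
        rw [← pow_mul]
        congr 1
        rw [← pow_succ]
        congr 1
        omega
      refine ⟨M * M2, hM.mul hM2, ?_⟩
      rw [PP_succ, hPM, h2a, hM2e]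
      have : w + (a + 1 - 1) = (w + (a-1)) + 1 := by omega
      rw [this]
      ring

/-- The key number-theoretic lemma. -/
private lemma NT (n a : ℕ) (r : ℕ)
    (hr : orderOf ((r : ZMod (2 ^ n))) = 2 ^ a)
    (hrne : ((r : ZMod (2 ^ n))) ≠ -1) (hn : 3 ≤ n) (k : ℤ)
    (hk : (2 ^ n : ℤ) ∣ ((r : ℤ) - 1) * k) :
    ∃ t : ℤ, (2 ^ n : ℤ) ∣ k + t * (PP r a : ℤ) := by
  rcases Nat.eq_zero_or_pos a with ha | ha
  · subst ha
    exact ⟨-k, by simp [PP_zero]⟩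
  have hfin : IsOfFinOrder ((r : ZMod (2^n))) := by
    rw [← orderOf_pos_iff, hr]
    positivity
  have hunit : IsUnit ((r : ZMod (2^n))) := hfin.isUnit
  have hcop : Nat.Coprime r (2 ^ n) := (ZMod.isUnit_iff_coprime r (2^n)).mp hunit
  have hro : Odd r := by
    rcases Nat.even_or_odd r with he | ho
    · exfalso
      obtain ⟨c, hc⟩ := he
      have h2 : (2:ℕ) ∣ Nat.gcd r (2^n) :=
        Nat.dvd_gcd ⟨c, by omega⟩ (dvd_pow_self 2 (by omega))
      rw [hcop] at h2
      omega
    · exact ho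
  have hrne1 : (r : ZMod (2^n)) ≠ 1 := by
    intro h
    rw [h, orderOf_one] at hr
    have := Nat.one_lt_two_pow_iff.mpr (by omega : a ≠ 0)
    omega
  have hr3 : 3 ≤ r := by
    rcases hro with ⟨c, hc⟩
    rcases Nat.eq_zero_or_pos c with rfl | hc'
    · exfalso; apply hrne1; rw [hc]; norm_num
    · omega
  obtain ⟨v, m, hm, hvm⟩ := Nat.exists_eq_pow_mul_and_not_dvd
    (show r - 1 ≠ 0 by omega) 2 (by norm_num)
  obtain ⟨w, m', hm', hwm⟩ := Nat.exists_eq_pow_mul_and_not_dvd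
    (show r + 1 ≠ 0 by omega) 2 (by norm_num)
  have hmodd : Odd m := Nat.odd_iff.mpr (by omega)
  have hm'odd : Odd m' := Nat.odd_iff.mpr (by omega)
  have hv1 : 1 ≤ v := by
    rcases Nat.eq_zero_or_pos v with rfl | h
    · exfalso
      obtain ⟨c, hc⟩ := hro
      obtain ⟨d, hd⟩ := hmodd
      rw [pow_zero, one_mul] at hvm
      omega
    · exact h
  have hw1 : 1 ≤ w := by
    rcases Nat.eq_zero_or_pos w with rfl | h
    · exfalso
      obtain ⟨c, hc⟩ := hro
      obtain ⟨d, hd⟩ := hm'odd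
      rw [pow_zero, one_mul] at hwm
      omega
    · exact h
  have hvn : v < n := by
    by_contra h
    push_neg at h
    have hdvd : (2:ℕ)^n ∣ r - 1 := hvm ▸ Dvd.dvd.mul_right (pow_dvd_pow 2 h) m
    have hmod : (1:ℕ) ≡ r [MOD 2^n] := (Nat.modEq_iff_dvd' (by omega)).mpr hdvd
    have : ((1:ℕ) : ZMod (2^n)) = ((r:ℕ) : ZMod (2^n)) :=
      (ZMod.natCast_eq_natCast_iff 1 r (2^n)).mpr hmod
    exact hrne1 (by simpa using this.symm)
  have hwn : w < n := by
    by_contra h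
    push_neg at h
    have hdvd : (2:ℕ)^n ∣ r + 1 := hwm ▸ Dvd.dvd.mul_right (pow_dvd_pow 2 h) m'
    obtain ⟨c, hc⟩ := hdvd
    apply hrne
    have h0 : ((r + 1 : ℕ) : ZMod (2^n)) = 0 := by
      rw [hc, Nat.cast_mul, ZMod.natCast_self, zero_mul]
    push_cast at h0
    exact eq_neg_of_add_eq_zero_left h0
  -- minimality : v + w + (a-1) <= n
  have hmin : v + w + (a - 1) ≤ n := by
    have hne : ((r : ZMod (2^n))) ^ (2 ^ (a-1)) ≠ 1 := by
      intro h
      have hdvd := orderOf_dvd_iff_pow_eq_one.mpr h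
      rw [hr] at hdvd
      have hle := Nat.le_of_dvd (by positivity) hdvd
      have := (Nat.pow_le_pow_iff_right (le_refl 2)).mp hle
      omega
    have hnd : ¬ ((2:ℤ)^n ∣ (r:ℤ)^(2^(a-1)) - 1) := by
      intro h
      apply hne
      have hcast : (((r ^ (2^(a-1)) : ℕ)) : ZMod (2^n)) = ((1:ℕ) : ZMod (2^n)) := by
        rw [ZMod.natCast_eq_natCast_iff]
        rw [Nat.modEq_iff_dvd]
        push_cast
        exact dvd_sub_comm.mp h
      push_cast at hcast
      exact hcast
    rcases Nat.eq_or_lt_of_le ha with ha1 | ha2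
    · -- a = 1 : use min(v,w) = 1
      have hminvw : v = 1 ∨ w = 1 := by
        by_contra hcon
        push_neg at hcon
        have h4v : (4:ℕ) ∣ r - 1 := hvm ▸ Dvd.dvd.mul_right
          ((show (4:ℕ) = 2^2 by norm_num) ▸ pow_dvd_pow 2 (by omega : 2 ≤ v)) m
        have h4w : (4:ℕ) ∣ r + 1 := hwm ▸ Dvd.dvd.mul_right
          ((show (4:ℕ) = 2^2 by norm_num) ▸ pow_dvd_pow 2 (by omega : 2 ≤ w)) m'
        obtain ⟨c1, hc1⟩ := h4v
        obtain ⟨c2, hc2⟩ := h4w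
        omega
      omega
    · -- a ≥ 2
      have ha1 : 1 ≤ a - 1 := by omega
      obtain ⟨M, hM, hPM⟩ := PP_val r w m' hro hwm hm'odd (a-1) ha1
      by_contra hcon
      push_neg at hcon
      apply hnd
      rw [← geom]
      have hcast : (r:ℤ) - 1 = ((2^v * m : ℕ) : ℤ) := by
        rw [← hvm]
        push_cast [Nat.cast_sub (by omega : 1 ≤ r)]
        ring
      rw [hcast, hPM]
      push_cast
      have hexp : n ≤ v + (w + (a - 1 - 1)) := by omega
      refine Dvd.dvd.trans (pow_dvd_pow (2:ℤ) hexp) ?_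
      rw [pow_add]
      exact mul_dvd_mul (dvd_mul_right _ _) (dvd_mul_right _ _)
  -- From hk : 2^(n-v) ∣ k
  have hcast : (r:ℤ) - 1 = 2^v * (m:ℤ) := by
    have : (r:ℤ) - 1 = ((r - 1 : ℕ) : ℤ) := by
      push_cast [Nat.cast_sub (by omega : 1 ≤ r)]; ring
    rw [this, hvm]; push_cast; ring
  rw [hcast] at hk
  have hknv : (2:ℤ)^(n-v) ∣ (m:ℤ) * k := by
    have h1 : (2:ℤ)^(n-v) * 2^v ∣ ((m:ℤ) * k) * 2^v := by
      rw [← pow_add]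
      have hnv : n - v + v = n := by omega
      rw [hnv]
      obtain ⟨d, hd⟩ := hk
      exact ⟨d, by linear_combination hd⟩
    exact (mul_dvd_mul_iff_right (pow_ne_zero v (two_ne_zero))).mp h1
  have hcopmz : IsCoprime ((2:ℤ)^(n-v)) ((m:ℤ)) := by
    have h1 : Nat.Coprime (2^(n-v)) m :=
      Nat.Coprime.pow_left _ (Nat.coprime_two_left.mpr hmodd)
    have h2 := Nat.isCoprime_iff_coprime.mpr h1
    push_cast at h2
    exact h2
  have hkdvd : (2:ℤ)^(n-v) ∣ k := hcopmz.dvd_of_dvd_mul_left hknv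
  obtain ⟨κ, hκ⟩ := hkdvd
  -- PP a decomposition and Bezout inverse of M
  obtain ⟨M, hM, hPM⟩ := PP_val r w m' hro hwm hm'odd a ha
  have hMcop : Nat.Coprime M (2^n) :=
    Nat.Coprime.pow_right _ (Nat.coprime_two_right.mpr hM)
  set x := Nat.gcdA M (2^n) with hx
  set y := Nat.gcdB M (2^n) with hy
  have hbez : (1:ℤ) = M * x + 2^n * y := by
    have hg : Nat.gcd M (2^n) = 1 := hMcop
    have hab := Nat.gcd_eq_gcd_ab M (2^n)
    rw [hg] at hab
    push_cast at hab
    exact hab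
  refine ⟨-(2^((n-v)-(w+(a-1))) * κ * x), ?_⟩
  have hPPc : (PP r a : ℤ) = 2^(w+(a-1)) * (M:ℤ) := by
    rw [hPM]; push_cast; ring
  rw [hκ, hPPc]
  have hpow : (2:ℤ)^((n-v)-(w+(a-1))) * 2^(w+(a-1)) = 2^(n-v) := by
    rw [← pow_add]
    congr 1
    omega
  have hrw : (2:ℤ)^(n-v)*κ + (-(2^((n-v)-(w+(a-1))) * κ * x))*(2^(w+(a-1)) * M)
      = 2^(n-v) * κ * (1 - M*x) := by
    rw [← hpow]; ring
  rw [hrw]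
  have h1x : (1:ℤ) - M*x = 2^n * y := by linear_combination hbez
  rw [h1x]
  exact ⟨2^(n-v) * κ * y, by ring⟩

section Grp
variable {G : Type*} [Group G]

private lemma conj1 (A C : G) (r : ℕ) (hconj : A⁻¹ * C * A = C ^ r) (e : ℤ) :
    A⁻¹ * C ^ e * A = C ^ (e * (r : ℤ)) := by
  have h : A⁻¹ * C ^ e * A = (A⁻¹ * C * A) ^ e := by
    have := conj_zpow (i := e) (a := A⁻¹) (b := C)
    simpa using this.symm
  rw [h, hconj, ← zpow_natCast, ← zpow_mul, mul_comm]

private lemma conj_pow_lemma (A C : G) (r : ℕ) (hconj : A⁻¹ * C * A = C ^ r) :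
    ∀ (j : ℕ) (e : ℤ), (A ^ j)⁻¹ * C ^ e * A ^ j = C ^ (e * ((r ^ j : ℕ) : ℤ)) := by
  intro j
  induction j with
  | zero => intro e; simp
  | succ j ih =>
      intro e
      rw [pow_succ, mul_inv_rev]
      calc A⁻¹ * (A ^ j)⁻¹ * C ^ e * (A ^ j * A)
          = A⁻¹ * ((A ^ j)⁻¹ * C ^ e * A ^ j) * A := by group
        _ = A⁻¹ * C ^ (e * ((r ^ j : ℕ) : ℤ)) * A := by rw [ih e]
        _ = C ^ (e * ((r ^ j : ℕ) : ℤ) * (r : ℤ)) := conj1 A C r hconj _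
        _ = C ^ (e * ((r ^ (j + 1) : ℕ) : ℤ)) := by push_cast; ring_nf

private lemma pow_two_pow (A C : G) (r : ℕ) (hconj : A⁻¹ * C * A = C ^ r) (t : ℤ) :
    ∀ m : ℕ, (A * C ^ t) ^ (2 ^ m) = A ^ (2 ^ m) * C ^ (t * ((PP r m : ℕ) : ℤ)) := by
  intro m
  induction m with
  | zero => simp [PP]
  | succ m ih =>
      have h2 : (2:ℕ) ^ (m+1) = 2 ^ m * 2 := by ring
      rw [h2, pow_mul, ih, sq]
      have hc := conj_pow_lemma A C r hconj (2 ^ m) (t * ((PP r m : ℕ) : ℤ))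
      have hswap : C ^ (t * ((PP r m : ℕ) : ℤ)) * A ^ (2 ^ m)
          = A ^ (2 ^ m) * C ^ (t * ((PP r m : ℕ) : ℤ) * ((r ^ (2 ^ m) : ℕ) : ℤ)) := by
        rw [← hc]; group
      calc A ^ (2^m) * C ^ (t * ((PP r m : ℕ) : ℤ)) * (A ^ (2^m) * C ^ (t * ((PP r m : ℕ) : ℤ)))
          = A ^ (2^m) * (C ^ (t * ((PP r m : ℕ) : ℤ)) * A ^ (2^m)) * C ^ (t * ((PP r m : ℕ) : ℤ)) := by
            group
        _ = A ^ (2^m) * (A ^ (2^m) * C ^ (t * ((PP r m : ℕ) : ℤ) * ((r ^ (2^m) : ℕ) : ℤ))) *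
              C ^ (t * ((PP r m : ℕ) : ℤ)) := by rw [hswap]
        _ = A ^ (2^m * 2) * C ^ (t * ((PP r m : ℕ) : ℤ) * ((r ^ (2^m) : ℕ) : ℤ) + t * ((PP r m : ℕ) : ℤ)) := by
            rw [zpow_add, pow_mul, sq]; group
        _ = A ^ (2^m * 2) * C ^ (t * ((PP r (m+1) : ℕ) : ℤ)) := by
            congr 1
            congr 1
            rw [PP_succ]
            push_cast
            ring

end Grp

theorem split_lemma_for_self_centralized_cyclic
    (G : Type*) [Group G] [Finite G] (n a : ℕ) (hn : 3 ≤ n)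
    (A C : G)
    (hgen : Subgroup.closure {A, C} = ⊤)
    (hord : orderOf C = 2 ^ n)
    (hnormal : (Subgroup.zpowers C).Normal)
    (hself : Subgroup.centralizer (Subgroup.zpowers C : Set G) ≤ Subgroup.zpowers C)
    (r : ℕ) (hconj : A⁻¹ * C * A = C ^ r)
    (hr : orderOf ((r : ZMod (2 ^ n))) = 2 ^ a)
    (hrne : ((r : ZMod (2 ^ n))) ≠ -1) :
    Nat.card G = 2 ^ (n + a) ∧
    ∃ A' : G, Subgroup.closure {A', C} = ⊤ ∧ A'⁻¹ * C * A' = C ^ r ∧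
      A' ^ (2 ^ a) = 1 := by
  have hN := hnormal
  set N := Subgroup.zpowers C with hNdef
  -- r^(2^a) ≡ 1 mod 2^n
  have hr2a : (r : ZMod (2^n)) ^ (2^a) = 1 := by
    rw [← hr]; exact pow_orderOf_eq_one _
  have hr2a' : r ^ (2^a) ≡ 1 [MOD 2^n] := by
    rw [← ZMod.natCast_eq_natCast_iff]
    push_cast
    simpa using hr2a
  have hint : ((r ^ (2^a) : ℕ) : ℤ) ≡ 1 [ZMOD ((2^n : ℕ) : ℤ)] :=
    Int.modEq_iff_dvd.mpr (by simpa using (Nat.modEq_iff_dvd (n := 2^n)).mp hr2a')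
  -- A^(2^a) ∈ N
  have hA2a : A ^ (2^a) ∈ N := by
    apply hself
    rw [Subgroup.mem_centralizer_iff]
    intro x hx
    obtain ⟨e, rfl⟩ := Subgroup.mem_zpowers_iff.mp hx
    have hc := conj_pow_lemma A C r hconj (2^a) e
    have heq : C ^ (e * ((r ^ (2^a) : ℕ) : ℤ)) = C ^ e := by
      rw [zpow_eq_zpow_iff_modEq, hord]
      simpa using Int.ModEq.mul_left e hint
    have h2 := congrArg (fun z => A ^ (2^a) * z) (hc.trans heq)
    simpa [← mul_assoc] using h2
  -- characterization of powers of A in N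
  have hmem : ∀ m : ℕ, A ^ m ∈ N ↔ 2^a ∣ m := by
    intro m
    constructor
    · intro hAm
      obtain ⟨kk, hkk⟩ := Subgroup.mem_zpowers_iff.mp hAm
      have hc := conj_pow_lemma A C r hconj m 1
      have hcomm : (A ^ m)⁻¹ * C ^ (1:ℤ) * A ^ m = C ^ (1:ℤ) := by
        rw [← hkk]; group
      have heqn : C ^ ((1:ℤ) * ((r ^ m : ℕ) : ℤ)) = C ^ (1:ℤ) := by rw [← hc, hcomm]
      rw [zpow_eq_zpow_iff_modEq, hord] at heqn
      rw [← hr, orderOf_dvd_iff_pow_eq_one]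
      have hm2 : ((r ^ m : ℕ) : ZMod (2^n)) = ((1:ℕ) : ZMod (2^n)) := by
        rw [ZMod.natCast_eq_natCast_iff, Nat.modEq_iff_dvd]
        have := heqn.dvd
        push_cast at this ⊢
        simpa using this
      push_cast at hm2
      exact hm2
    · rintro ⟨c, rfl⟩
      rw [pow_mul]
      exact Subgroup.pow_mem N hA2a c
  -- order of the image of A in the quotient
  have hordAbar : orderOf (QuotientGroup.mk' N A) = 2^a := by
    apply Nat.dvd_antisymm
    · rw [orderOf_dvd_iff_pow_eq_one, ← map_pow, QuotientGroup.mk'_apply,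
        QuotientGroup.eq_one_iff]
      exact (hmem _).mpr dvd_rfl
    · have h1 := pow_orderOf_eq_one (QuotientGroup.mk' N A)
      rw [← map_pow, QuotientGroup.mk'_apply, QuotientGroup.eq_one_iff] at h1
      exact (hmem _).mp h1
  -- the quotient is generated by the image of A
  have htop : Subgroup.zpowers (QuotientGroup.mk' N A) = (⊤ : Subgroup (G ⧸ N)) := by
    have hmap : Subgroup.map (QuotientGroup.mk' N) (Subgroup.closure {A, C}) = ⊤ := by
      rw [hgen]; exact Subgroup.map_top_of_surjective _ (QuotientGroup.mk'_surjective N)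
    rw [MonoidHom.map_closure, Set.image_insert_eq, Set.image_singleton] at hmap
    have hCbar : QuotientGroup.mk' N C = 1 := by
      rw [QuotientGroup.mk'_apply, QuotientGroup.eq_one_iff]
      exact Subgroup.mem_zpowers C
    rw [hCbar] at hmap
    rw [Subgroup.zpowers_eq_closure, ← hmap]
    apply le_antisymm
    · exact Subgroup.closure_mono (by intro z hz; simp at hz; simp [hz])
    · rw [Subgroup.closure_le]
      intro z hz
      simp only [Set.mem_insert_iff, Set.mem_singleton_iff] at hz
      rcases hz with rfl | rfl
      · exact Subgroup.subset_closure rfl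
      · exact Subgroup.one_mem _
  have hcardQ : Nat.card (G ⧸ N) = 2^a := by
    rw [← Subgroup.card_top (G := G ⧸ N), ← htop, Nat.card_zpowers, hordAbar]
  have hcardN : Nat.card N = 2^n := by
    rw [hNdef, Nat.card_zpowers, hord]
  have hcardG : Nat.card G = 2^(n+a) := by
    rw [Subgroup.card_eq_card_quotient_mul_card_subgroup N, hcardQ, hcardN, ← pow_add]
    ring_nf
  refine ⟨hcardG, ?_⟩
  -- construct A'
  obtain ⟨k, hk⟩ := Subgroup.mem_zpowers_iff.mp hA2a
  have hrel : (2^n : ℤ) ∣ ((r:ℤ) - 1) * k := by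
    have h1 : A⁻¹ * C ^ k * A = C ^ k := by
      rw [hk]; group
    have h2 := conj1 A C r hconj k
    have h3 : C ^ (k * (r:ℤ)) = C ^ k := by rw [← h2, h1]
    rw [zpow_eq_zpow_iff_modEq, hord] at h3
    obtain ⟨d, hd⟩ := h3.dvd
    refine ⟨-d, ?_⟩
    push_cast at hd ⊢
    linear_combination -hd
  obtain ⟨t, ht⟩ := NT n a r hr hrne hn k hrel
  refine ⟨A * C ^ t, ?_, ?_, ?_⟩
  · rw [eq_top_iff, ← hgen, Subgroup.closure_le]
    intro z hz
    simp only [Set.mem_insert_iff, Set.mem_singleton_iff] at hz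
    rcases hz with rfl | rfl
    · have hA : z = (z * C ^ t) * C ^ (-t) := by group
      rw [hA]
      exact mul_mem (Subgroup.subset_closure (by simp))
        (Subgroup.zpow_mem _ (Subgroup.subset_closure (by simp)) _)
    · exact Subgroup.subset_closure (by simp)
  · rw [mul_inv_rev]
    calc (C ^ t)⁻¹ * A⁻¹ * C * (A * C ^ t)
        = (C ^ t)⁻¹ * (A⁻¹ * C * A) * C ^ t := by group
      _ = (C ^ t)⁻¹ * C ^ r * C ^ t := by rw [hconj]
      _ = C ^ r := by group
  · rw [pow_two_pow A C r hconj t a, ← hk, ← zpow_add]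
    obtain ⟨d, hd⟩ := ht
    have h2n : C ^ ((2:ℤ)^n) = 1 := by
      rw [show ((2:ℤ)^n) = ((2^n : ℕ) : ℤ) by push_cast; ring, zpow_natCast, ← hord,
        pow_orderOf_eq_one]
    rw [hd, zpow_mul, h2n, one_zpow]
end

section
/- Let 𝒢 be a permutation-like matrix group of dimension d and let C ∈ 𝒢 be a maximal cycle. Then ⟨C⟩ is self-centralized in 𝒢: every A ∈ 𝒢 that commutes with C lies in the cyclic subgroup ⟨C⟩ generated by C. -/
open Matrix

/-- A `d × d` complex matrix is a permutation matrix if it is the matrix of some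
permutation of the standard basis. -/
def IsPermMatrix {d : ℕ} (M : Matrix (Fin d) (Fin d) ℂ) : Prop :=
  ∃ σ : Equiv.Perm (Fin d), M = σ.permMatrix ℂ

/-- A `d × d` complex matrix is a maximal cycle if it is similar to the permutation
matrix of a cycle of length `d`. -/
def IsMaximalCycle {d : ℕ} (M : Matrix (Fin d) (Fin d) ℂ) : Prop :=
  ∃ T : (Matrix (Fin d) (Fin d) ℂ)ˣ,
    T⁻¹.val * M * T.val = (finRotate d).permMatrix ℂ

/-- A matrix group (subgroup of `GL_d(ℂ)`) is permutation-like if each of its elements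
is similar to a permutation matrix. -/
def IsPermutationLikeGroup {d : ℕ} (G : Subgroup (GL (Fin d) ℂ)) : Prop :=
  ∀ A ∈ G, ∃ T : (Matrix (Fin d) (Fin d) ℂ)ˣ,
    IsPermMatrix (T⁻¹.val * A.val * T.val)

/-- A matrix group is a permutation matrix group if a single similarity transformation
turns all of its elements into permutation matrices simultaneously. -/
def IsPermutationMatrixGroup {d : ℕ} (G : Subgroup (GL (Fin d) ℂ)) : Prop :=
  ∃ T : (Matrix (Fin d) (Fin d) ℂ)ˣ, ∀ A ∈ G,
    IsPermMatrix (T⁻¹.val * A.val * T.val)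

/-!
Conjugating `C` to the cyclic shift `P = (finRotate d).permMatrix ℂ`, an element `A` commuting
with `C` becomes a circulant matrix `B = circulant b`. The traces of the elements `A * C ^ k` of
the group count fixed points, so `d • b k` is a natural number and `b` is real and nonnegative.
As `B` has finite order, its eigenvalues `∑ k, b k * ψ (-k)` at the additive characters `ψ` of
`Fin d` have norm one: for `ψ = 1` this gives `∑ k, b k = 1`, and for a faithful `ψ` the equality
case of the triangle inequality concentrates `b` at a single point `k₀`, i.e. `B = P ^ (-k₀)`.
-/

open Fin.NatCast

namespace Equiv.Perm

variable {n R : Type*} [DecidableEq n] [Fintype n]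

theorem permMatrix_pow [Semiring R] (σ : Perm n) (k : ℕ) :
    σ.permMatrix R ^ k = (σ ^ k).permMatrix R := by
  simpa using (map_pow (Matrix.permMatrixHom (n := n) (R := R)) σ⁻¹ k).symm

theorem submatrix_eq_self_of_commute_permMatrix [Semiring R] {σ : Perm n} {B : Matrix n n R}
    (h : Commute (σ.permMatrix R) B) : B.submatrix σ σ = B := by
  have h' : B.submatrix σ id = B.submatrix id σ.symm :=
    (PEquiv.toMatrix_toPEquiv_mul σ B).symm.trans (h.eq.trans (PEquiv.mul_toMatrix_toPEquiv B σ))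
  ext i j
  simpa using congr_fun₂ h' i (σ j)

end Equiv.Perm

theorem finRotate_pow_apply {d : ℕ} [NeZero d] (k : ℕ) (i : Fin d) :
    (finRotate d ^ k) i = i + k := by
  induction k with
  | zero => simp
  | succ k ih =>
    rw [pow_succ', Equiv.Perm.mul_apply, ih, finRotate_apply, Nat.cast_succ, add_assoc]

namespace Matrix

theorem trace_circulant {n R : Type*} [Fintype n] [AddGroup n] [AddCommMonoid R] (v : n → R) :
    trace (circulant v) = Fintype.card n • v 0 := by
  simp [trace, circulant_apply]

theorem circulant_mulVec_addChar {n R : Type*} [Fintype n] [AddCommGroup n]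
    [CommSemiring R] (v : n → R) (ψ : AddChar n R) :
    circulant v *ᵥ ψ = (∑ k, v k * ψ (-k)) • ⇑ψ := by
  ext i
  rw [Pi.smul_apply, smul_eq_mul, Finset.sum_mul, mulVec, dotProduct]
  refine Fintype.sum_equiv (Equiv.subLeft i) _ _ fun j => ?_
  rw [Equiv.subLeft_apply, circulant_apply, mul_assoc, ← AddChar.map_add_eq_mul, neg_sub,
    sub_add_cancel]

theorem isOfFinOrder_of_mulVec_eq_smul {n K : Type*} [Fintype n] [DecidableEq n] [Field K]
    {B : Matrix n n K} {v : n → K} {a : K} (hB : IsOfFinOrder B) (hv : B *ᵥ v = a • v)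
    (hv0 : v ≠ 0) : IsOfFinOrder a := by
  obtain ⟨N, hN, hBN⟩ := hB.exists_pow_eq_one
  have hpow : ∀ k : ℕ, B ^ k *ᵥ v = a ^ k • v := by
    intro k
    induction k with
    | zero => simp
    | succ k ih => rw [pow_succ, ← mulVec_mulVec, hv, mulVec_smul, ih, smul_smul, pow_succ']
  refine isOfFinOrder_iff_pow_eq_one.2 ⟨N, hN, smul_left_injective K hv0 ?_⟩
  simp only [← hpow, hBN, one_mulVec, one_smul]

variable {d : ℕ} [NeZero d] {R : Type*} [Semiring R]

theorem permMatrix_finRotate_pow (k : ℕ) :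
    (finRotate d).permMatrix R ^ k = circulant (Pi.single (-(k : Fin d)) 1) := by
  ext i j
  rw [Equiv.Perm.permMatrix_pow, circulant_apply, Pi.single_apply]
  simp only [PEquiv.toMatrix_apply, Equiv.toPEquiv_apply, Option.mem_def, Option.some_inj,
    finRotate_pow_apply, sub_eq_iff_eq_add, neg_add_eq_sub, eq_sub_iff_add_eq]

theorem eq_circulant_of_commute_permMatrix_finRotate {B : Matrix (Fin d) (Fin d) R}
    (h : Commute ((finRotate d).permMatrix R) B) : B = circulant fun k => B k 0 := by
  ext i j
  have hk := Equiv.Perm.submatrix_eq_self_of_commute_permMatrix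
    ((Equiv.Perm.permMatrix_pow (R := R) (finRotate d) j.val) ▸ h.pow_left j.val)
  simpa [finRotate_pow_apply] using congr_fun₂ hk (i - j) 0

theorem trace_circulant_mul_permMatrix_finRotate_pow (v : Fin d → R) (k : ℕ) :
    trace (circulant v * (finRotate d).permMatrix R ^ k) = d • v k := by
  rw [permMatrix_finRotate_pow, circulant_mul, trace_circulant, Fintype.card_fin]
  simp [mulVec_single]

end Matrix

theorem eq_sum_smul_of_norm_sum_smul_eq_one {ι E : Type*} [Fintype ι] [NormedAddCommGroup E]
    [InnerProductSpace ℝ E] {c : ι → ℝ} {w : ι → E} (hc : ∀ i, 0 ≤ c i) (hc1 : ∑ i, c i = 1)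
    (hw : ∀ i, ‖w i‖ = 1) (hs : ‖∑ i, c i • w i‖ = 1) {i : ι} (hi : c i ≠ 0) :
    w i = ∑ j, c j • w j := by
  set s := ∑ j, c j • w j
  have hle : ∀ j ∈ Finset.univ, c j * inner ℝ s (w j) ≤ c j := fun j _ =>
    mul_le_of_le_one_right (hc j) ((real_inner_le_norm _ _).trans (by rw [hs, hw, one_mul]))
  have hsum : ∑ j, c j * inner ℝ s (w j) = ∑ j, c j := by
    calc ∑ j, c j * inner ℝ s (w j) = inner ℝ s s := by
          simp only [s, inner_sum, real_inner_smul_right]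
      _ = ∑ j, c j := by rw [real_inner_self_eq_norm_sq, hs, hc1, one_pow]
  have hi' : c i * inner ℝ s (w i) = c i * 1 := by
    rw [mul_one]
    exact (Finset.sum_eq_sum_iff_of_le hle).1 hsum i (Finset.mem_univ i)
  exact ((inner_eq_one_iff_of_norm_eq_one hs (hw i)).1 (mul_left_cancel₀ hi hi')).symm

theorem exists_eq_single_of_norm_sum_smul_eq_one {ι E : Type*} [Fintype ι] [DecidableEq ι]
    [NormedAddCommGroup E] [InnerProductSpace ℝ E] {c : ι → ℝ} {w : ι → E} (hc : ∀ i, 0 ≤ c i)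
    (hc1 : ∑ i, c i = 1) (hw : ∀ i, ‖w i‖ = 1) (hinj : Function.Injective w)
    (hs : ‖∑ i, c i • w i‖ = 1) : ∃ i, c = Pi.single i 1 := by
  obtain ⟨i, -, hi⟩ := Finset.exists_ne_zero_of_sum_ne_zero (hc1.symm ▸ one_ne_zero)
  have hzero : ∀ j, j ≠ i → c j = 0 := fun j hji => by
    by_contra hj
    exact hji (hinj ((eq_sum_smul_of_norm_sum_smul_eq_one hc hc1 hw hs hj).trans
      (eq_sum_smul_of_norm_sum_smul_eq_one hc hc1 hw hs hi).symm))
  refine ⟨i, funext fun j => ?_⟩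
  rcases eq_or_ne j i with rfl | hji
  · rw [Pi.single_eq_same, ← hc1, Finset.sum_eq_single j (fun k _ => hzero k) (by simp)]
  · rw [Pi.single_eq_of_ne hji, hzero j hji]

open Fin.CommRing in
theorem exists_injective_addChar_fin (d : ℕ) [NeZero d] :
    ∃ ψ : AddChar (Fin d) ℂ, Function.Injective ψ :=
  ⟨ZMod.stdAddChar.compAddMonoidHom (ZMod.finEquiv d).toAddMonoidHom,
    fun _ _ h => (ZMod.finEquiv d).injective (ZMod.injective_stdAddChar h)⟩

theorem Matrix.exists_eq_permMatrix_finRotate_pow {d : ℕ} [NeZero d]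
    {B : Matrix (Fin d) (Fin d) ℂ} (hcomm : Commute ((finRotate d).permMatrix ℂ) B)
    (hB : IsOfFinOrder B)
    (htr : ∀ k : ℕ, ∃ t : ℕ, trace (B * (finRotate d).permMatrix ℂ ^ k) = t) :
    ∃ k : ℕ, B = (finRotate d).permMatrix ℂ ^ k := by
  have hBb := eq_circulant_of_commute_permMatrix_finRotate hcomm
  obtain ⟨c, hc0, hc⟩ :
      ∃ c : Fin d → ℝ, (∀ k, 0 ≤ c k) ∧ (fun k => B k 0) = fun k => (c k : ℂ) := by
    choose t ht using htr
    refine ⟨fun k => t k / d, fun k => by positivity, funext fun k => ?_⟩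
    have hk := ht k
    rw [hBb, trace_circulant_mul_permMatrix_finRotate_pow, Fin.cast_val_eq_self,
      nsmul_eq_mul] at hk
    push_cast
    rw [← hk, mul_div_cancel_left₀ _ (Nat.cast_ne_zero.2 (NeZero.ne d))]
  rw [hc] at hBb
  have heig (ψ : AddChar (Fin d) ℂ) : ‖∑ k, (c k : ℂ) * ψ (-k)‖ = 1 :=
    (isOfFinOrder_of_mulVec_eq_smul (hBb ▸ hB) (circulant_mulVec_addChar _ ψ)
      (fun h => by simpa using congr_fun h 0)).norm_eq_one
  have hc1 : ∑ k, c k = 1 := by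
    simpa [← Complex.ofReal_sum, abs_of_nonneg (Finset.sum_nonneg fun k _ => hc0 k)] using heig 1
  obtain ⟨ψ, hψ⟩ := exists_injective_addChar_fin d
  obtain ⟨k₀, rfl⟩ := exists_eq_single_of_norm_sum_smul_eq_one (w := fun k => ψ (-k)) hc0 hc1
    (fun k => ψ.norm_apply _) (hψ.comp neg_injective) (by simpa [Complex.real_smul] using heig ψ)
  refine ⟨(-k₀ : Fin d).val, ?_⟩
  rw [hBb, permMatrix_finRotate_pow, Fin.cast_val_eq_self, neg_neg]
  congr 1
  ext k
  simp [Pi.single_apply, apply_ite]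

namespace IsPermutationLikeGroup

variable {d : ℕ} {G : Subgroup (GL (Fin d) ℂ)}

theorem exists_trace_eq_natCast (hG : IsPermutationLikeGroup G) {A : GL (Fin d) ℂ}
    (hA : A ∈ G) :
    ∃ t : ℕ, trace A.val = t := by
  obtain ⟨T, σ, hσ⟩ := hG A hA
  exact ⟨_, by rw [← trace_units_conj' T, hσ, trace_permutation]⟩

theorem isOfFinOrder (hG : IsPermutationLikeGroup G) {A : GL (Fin d) ℂ} (hA : A ∈ G) :
    IsOfFinOrder A := by
  obtain ⟨T, σ, hσ⟩ := hG A hA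
  obtain ⟨N, hN, hσN⟩ := (isOfFinOrder_of_finite σ).exists_pow_eq_one
  refine isOfFinOrder_iff_pow_eq_one.2 ⟨N, hN, Units.ext ?_⟩
  have h : T⁻¹.val * A.val ^ N * T.val = 1 := by
    rw [← Units.conj_pow', hσ, Equiv.Perm.permMatrix_pow, hσN, permMatrix_one]
  calc (A ^ N).val = T.val * (T⁻¹.val * A.val ^ N * T.val) * T⁻¹.val := by simp [mul_assoc]
    _ = 1 := by rw [h, mul_one, Units.mul_inv]

end IsPermutationLikeGroup

theorem maximal_cycle_self_centralized
    (d : ℕ) (G : Subgroup (GL (Fin d) ℂ))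
    (hG : IsPermutationLikeGroup G)
    (C : GL (Fin d) ℂ) (hCG : C ∈ G)
    (hC : IsMaximalCycle C.val) :
    ∀ A ∈ G, A * C = C * A → A ∈ Subgroup.zpowers C := by
  intro A hA hAC
  rcases eq_or_ne d 0 with rfl | hd
  · exact Subgroup.mem_zpowers_iff.2 ⟨0, Subsingleton.elim _ _⟩
  have : NeZero d := ⟨hd⟩
  obtain ⟨T, hT⟩ := hC
  set φ := MulAut.conj T⁻¹
  have hφ (X : GL (Fin d) ℂ) : (φ X).val = T⁻¹.val * X.val * T.val := by simp [φ]
  obtain ⟨k, hk⟩ := Matrix.exists_eq_permMatrix_finRotate_pow (B := (φ A).val)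
    (by rw [← hT, ← hφ]; exact (Commute.map (Commute.symm hAC) φ).units_val)
    (Units.isOfFinOrder_val.2 (φ.toMonoidHom.isOfFinOrder (hG.isOfFinOrder hA)))
    (fun k => by
      rw [← hT, ← hφ, ← Units.val_pow_eq_pow_val, ← map_pow, ← Units.val_mul, ← map_mul, hφ,
        trace_units_conj']
      exact hG.exists_trace_eq_natCast (G.mul_mem hA (G.pow_mem hCG k)))
  rw [← hT, ← hφ, ← Units.val_pow_eq_pow_val, ← map_pow] at hk
  exact Subgroup.mem_zpowers_iff.2 ⟨k, by simpa using (φ.injective (Units.ext hk)).symm⟩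
end

section
/- Let A be a d×d complex matrix that is similar to a permutation matrix, and let m, N be positive integers. If Φ_N(x)^m divides the characteristic polynomial char_A(x), then for every positive integer k dividing N, Φ_k(x)^m also divides char_A(x). -/
/-!
The characteristic polynomial of the permutation matrix of `σ` is `∏ (X ^ ℓ - 1)`, the product
running over the cycles of `σ`, of lengths `ℓ`: the matrix is block diagonal along the cycles,
and on a cycle of length `ℓ` it satisfies `X ^ ℓ - 1` but, having a cyclic vector, no nonzero
polynomial of smaller degree. As `X ^ ℓ - 1` is separable, a root of unity `ζ` is a root of the
characteristic polynomial with multiplicity the number of cycles whose length is a multiple of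
the order of `ζ`. This number can only grow when the order is replaced by one of its divisors,
and `Φ_k ^ m` divides a polynomial exactly when every primitive `k`-th root of unity is a root
of multiplicity at least `m`.
-/

open Matrix Polynomial

/-- `A` is similar to a permutation matrix. -/
def IsSimilarToPermMatrix {d : ℕ} (A : Matrix (Fin d) (Fin d) ℂ) : Prop :=
  ∃ T : (Matrix (Fin d) (Fin d) ℂ)ˣ, IsPermMatrix (T⁻¹.val * A * T.val)

open Equiv Function Finset

namespace Polynomial

variable {K : Type*} [Field K]

theorem cyclotomic_pow_dvd_iff_le_rootMultiplicity {k m : ℕ} {ζ : K} (hζ : IsPrimitiveRoot ζ k)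
    {f : K[X]} (hf : f ≠ 0) :
    cyclotomic k K ^ m ∣ f ↔ ∀ η ∈ primitiveRoots k K, m ≤ rootMultiplicity η f := by
  rw [cyclotomic_eq_prod_X_sub_primitiveRoots hζ, ← prod_pow]
  refine ⟨fun h η hη => ?_, fun h => prod_dvd_of_coprime ?_ fun η hη => ?_⟩
  · exact (le_rootMultiplicity_iff hf).2 ((dvd_prod_of_mem (fun η => (X - C η) ^ m) hη).trans h)
  · intro a _ b _ hab
    exact IsCoprime.pow (isCoprime_X_sub_C_of_isUnit_sub (sub_ne_zero.2 hab).isUnit)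
  · exact (le_rootMultiplicity_iff hf).1 (h η hη)

variable [DecidableEq K]

theorem rootMultiplicity_X_pow_sub_one {c : ℕ} (hc : (c : K) ≠ 0) (ζ : K) :
    rootMultiplicity ζ (X ^ c - 1 : K[X]) = if ζ ^ c = 1 then 1 else 0 := by
  have hsep : (X ^ c - 1 : K[X]).Separable := by
    simpa using separable_X_pow_sub_C (1 : K) hc one_ne_zero
  split_ifs with h
  · exact le_antisymm (rootMultiplicity_le_one_of_separable hsep ζ)
      ((rootMultiplicity_pos hsep.ne_zero).2 (by simp [h]))
  · exact rootMultiplicity_eq_zero (by simp [h, sub_eq_zero])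

theorem rootMultiplicity_prod_X_pow_sub_one {ι : Type*} (s : Finset ι) {c : ι → ℕ}
    (hc : ∀ i ∈ s, (c i : K) ≠ 0) (ζ : K) :
    rootMultiplicity ζ (∏ i ∈ s, (X ^ c i - 1 : K[X])) = #{i ∈ s | ζ ^ c i = 1} := by
  have hne : ∏ i ∈ s, (X ^ c i - 1 : K[X]) ≠ 0 := prod_ne_zero_iff.2 fun i hi => by
    have hci : 0 < c i := Nat.pos_of_ne_zero fun h => hc i hi (by simp [h])
    simpa using X_pow_sub_C_ne_zero hci (1 : K)
  rw [← count_roots, roots_prod _ _ hne, Multiset.count_bind, card_filter]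
  refine sum_congr rfl fun i hi => ?_
  rw [count_roots, rootMultiplicity_X_pow_sub_one (hc i hi)]

end Polynomial

namespace Equiv.Perm

variable {α : Type*} [Fintype α] {σ : Perm α} {x : α}

theorem card_eq_minimalPeriod_of_forall_sameCycle (hσ : ∀ y, σ.SameCycle x y) :
    Fintype.card α = minimalPeriod σ x := by
  have hpos := minimalPeriod_pos_of_mem_periodicPts (σ.injective.mem_periodicPts x)
  have hbij : Bijective fun i : Fin (minimalPeriod σ x) => σ^[i] x := by
    refine ⟨fun i j hij => Fin.ext ((iterate_eq_iterate_iff_of_lt_minimalPeriod i.2 j.2).1 hij),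
      fun y => ?_⟩
    obtain ⟨i, rfl⟩ := (hσ y).exists_nat_pow_eq
    exact ⟨⟨i % _, Nat.mod_lt i hpos⟩, by simp [iterate_mod_minimalPeriod_eq, coe_pow]⟩
  simpa using (Fintype.card_of_bijective hbij).symm

theorem pow_minimalPeriod_eq_one_of_forall_sameCycle (hσ : ∀ y, σ.SameCycle x y) :
    σ ^ minimalPeriod σ x = 1 := by
  ext y
  obtain ⟨i, rfl⟩ := (hσ y).exists_nat_pow_eq
  rw [← mul_apply, ← pow_add, add_comm, pow_add, mul_apply, coe_pow σ (minimalPeriod σ x),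
    iterate_minimalPeriod, one_apply]

end Equiv.Perm

namespace Matrix

variable {α : Type*} [Fintype α] [DecidableEq α] {R : Type*} [CommRing R]

theorem permMatrix_pow (σ : Perm α) (k : ℕ) : (σ ^ k).permMatrix R = σ.permMatrix R ^ k := by
  induction k with
  | zero => simp
  | succ k ih => rw [pow_succ, permMatrix_mul, ih, ← pow_succ']

theorem aeval_permMatrix_apply_pow_apply (σ : Perm α) (x : α) {p : R[X]} {t : ℕ}
    (hp : p.natDegree < minimalPeriod σ x) (ht : t < minimalPeriod σ x) :
    aeval (σ.permMatrix R) p x ((σ ^ t) x) = p.coeff t := by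
  rw [aeval_eq_sum_range' hp, Matrix.sum_apply, Finset.sum_eq_single t]
  · simp [← permMatrix_pow, PEquiv.toMatrix_apply]
  · intro i hi hit
    simp only [Matrix.smul_apply, ← permMatrix_pow, PEquiv.toMatrix_apply, toPEquiv_apply,
      Option.mem_def, Option.some.injEq, Perm.coe_pow, smul_eq_mul]
    rw [if_neg, mul_zero]
    rwa [iterate_eq_iterate_iff_of_lt_minimalPeriod (Finset.mem_range.1 hi) ht]
  · simp [ht]

theorem eq_zero_of_aeval_permMatrix_eq_zero (σ : Perm α) (x : α) {p : R[X]}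
    (hp : p.natDegree < minimalPeriod σ x) (h : aeval (σ.permMatrix R) p = 0) : p = 0 := by
  ext t
  rcases lt_or_ge t (minimalPeriod σ x) with ht | ht
  · rw [← aeval_permMatrix_apply_pow_apply σ x hp ht, h, zero_apply, coeff_zero]
  · exact coeff_eq_zero_of_natDegree_lt (hp.trans_le ht)

theorem charpoly_permMatrix_eq_prod_subtypePerm {ι : Type*} [LinearOrder ι] (σ : Perm α)
    (b : α → ι) (hb : ∀ x, b (σ x) = b x) :
    (σ.permMatrix R).charpoly = ∏ i ∈ univ.image b,
      ((σ.subtypePerm (p := fun x => b x = i) fun x => by rw [hb]).permMatrix R).charpoly := by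
  have hblock : (σ.permMatrix R).BlockTriangular b := by
    intro x y hxy
    simp only [PEquiv.toMatrix_apply, toPEquiv_apply, Option.mem_def, Option.some.injEq]
    rw [if_neg]
    rintro rfl
    exact hxy.ne (hb x)
  rw [hblock.charpoly]
  congr! 2 with i
  ext x y
  simp [toSquareBlock_def, Subtype.ext_iff]

variable [Nontrivial R]

theorem charpoly_permMatrix_of_forall_sameCycle {σ : Perm α} {x : α}
    (hσ : ∀ y, σ.SameCycle x y) : (σ.permMatrix R).charpoly = X ^ Fintype.card α - 1 := by
  have hc := Perm.card_eq_minimalPeriod_of_forall_sameCycle hσ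
  have hc0 : Fintype.card α ≠ 0 := (Fintype.card_pos_iff.2 ⟨x⟩).ne'
  refine sub_eq_zero.1 (eq_zero_of_aeval_permMatrix_eq_zero σ x ?_ ?_)
  · rw [← hc]
    refine IsMonicOfDegree.natDegree_sub_lt hc0
      ⟨charpoly_natDegree_eq_dim _, charpoly_monic _⟩ ?_
    exact (isMonicOfDegree_X_pow R _).sub (by simpa using Nat.pos_of_ne_zero hc0)
  · rw [map_sub, aeval_self_charpoly, map_sub, map_pow, aeval_X, map_one, ← permMatrix_pow, hc,
      Perm.pow_minimalPeriod_eq_one_of_forall_sameCycle hσ, permMatrix_one, sub_self, sub_zero]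

open scoped Classical in
theorem charpoly_permMatrix (σ : Perm α) :
    (σ.permMatrix R).charpoly = ∏ c : Quotient (Perm.SameCycle.setoid σ),
      (X ^ Fintype.card {x // Quotient.mk _ x = c} - 1) := by
  -- `BlockTriangular.charpoly` needs some linear order on the blocks; any one will do.
  let _ : LinearOrder (Quotient (Perm.SameCycle.setoid σ)) :=
    IsWellOrder.linearOrder WellOrderingRel
  rw [charpoly_permMatrix_eq_prod_subtypePerm σ (Quotient.mk (Perm.SameCycle.setoid σ))
    (fun x => Quotient.sound (Perm.sameCycle_apply_left.2 (Perm.SameCycle.refl σ x)))]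
  refine prod_congr (eq_univ_of_forall fun c => by simpa using c.exists_rep) fun c _ => ?_
  obtain ⟨x, rfl⟩ := c.exists_rep
  convert charpoly_permMatrix_of_forall_sameCycle (R := R)
    (x := (⟨x, rfl⟩ : {y // Quotient.mk _ y = Quotient.mk _ x}))
    fun y => Perm.sameCycle_subtypePerm.2
      (Quotient.exact (s := Perm.SameCycle.setoid σ) y.2.symm)

variable {K : Type*} [Field K] [CharZero K]

open scoped Classical in
theorem rootMultiplicity_charpoly_permMatrix (σ : Perm α) (ζ : K) :
    rootMultiplicity ζ (σ.permMatrix K).charpoly =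
      #{c : Quotient (Perm.SameCycle.setoid σ) |
        ζ ^ Fintype.card {x // Quotient.mk _ x = c} = 1} := by
  rw [charpoly_permMatrix, rootMultiplicity_prod_X_pow_sub_one]
  intro c _
  obtain ⟨x, rfl⟩ := c.exists_rep
  exact Nat.cast_ne_zero.2 (Fintype.card_pos_iff.2 ⟨⟨x, rfl⟩⟩).ne'

theorem rootMultiplicity_charpoly_permMatrix_le (σ : Perm α) {ζ η : K}
    (h : ∀ n : ℕ, ζ ^ n = 1 → η ^ n = 1) :
    rootMultiplicity ζ (σ.permMatrix K).charpoly ≤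
      rootMultiplicity η (σ.permMatrix K).charpoly := by
  classical
  simp only [rootMultiplicity_charpoly_permMatrix]
  exact card_le_card (monotone_filter_right _ fun _ _ => h _)

end Matrix

theorem cyclotomic_divisor_of_charpoly_descends_general
    (d : ℕ) (A : Matrix (Fin d) (Fin d) ℂ)
    (hA : IsSimilarToPermMatrix A)
    (m N : ℕ) (hN : 0 < N)
    (hdvd : (cyclotomic N ℂ) ^ m ∣ A.charpoly) :
    ∀ k : ℕ, 0 < k → k ∣ N → (cyclotomic k ℂ) ^ m ∣ A.charpoly := by
  intro k hk hkN
  obtain ⟨T, σ, hσ⟩ := hA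
  have hchar : A.charpoly = (σ.permMatrix ℂ).charpoly := by
    rw [← hσ, coe_units_inv, charpoly_units_conj']
  have hf : A.charpoly ≠ 0 := (charpoly_monic A).ne_zero
  obtain ⟨ζ, hζ⟩ : ∃ ζ : ℂ, IsPrimitiveRoot ζ N :=
    ⟨_, Complex.isPrimitiveRoot_exp N hN.ne'⟩
  rw [cyclotomic_pow_dvd_iff_le_rootMultiplicity hζ hf] at hdvd
  rw [cyclotomic_pow_dvd_iff_le_rootMultiplicity (Complex.isPrimitiveRoot_exp k hk.ne') hf]
  intro η hη
  have hζη (n : ℕ) (hn : ζ ^ n = 1) : η ^ n = 1 :=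
    ((mem_primitiveRoots hk).1 hη).pow_eq_one_iff_dvd n |>.2
      (hkN.trans ((hζ.pow_eq_one_iff_dvd n).1 hn))
  calc m ≤ rootMultiplicity ζ A.charpoly := hdvd ζ ((mem_primitiveRoots hN).2 hζ)
    _ ≤ rootMultiplicity η A.charpoly := by
      rw [hchar]
      exact rootMultiplicity_charpoly_permMatrix_le σ hζη

theorem cyclotomic_divisor_of_charpoly_descends
    (d : ℕ) (A : Matrix (Fin d) (Fin d) ℂ)
    (hA : IsSimilarToPermMatrix A)
    (m N : ℕ) (hm : 0 < m) (hN : 0 < N)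
    (hdvd : (cyclotomic N ℂ) ^ m ∣ A.charpoly) :
    ∀ k : ℕ, 0 < k → k ∣ N → (cyclotomic k ℂ) ^ m ∣ A.charpoly :=
  cyclotomic_divisor_of_charpoly_descends_general d A hA m N hN hdvd
end

section
/- Let A, C ∈ GL_{2^n}(ℂ) with C a maximal cycle and A⁻¹CA ∈ ⟨C⟩ (so ⟨C⟩ is normal in ⟨A, C⟩). Let λ be a primitive 2^n-th root of unity. If there exists T ∈ GL_{2^n}(ℂ) such that T⁻¹CT is the diagonal matrix with diagonal entries λ^0, λ^1, …, λ^{2^n−1} and T⁻¹AT is a permutation matrix, then the matrix group ⟨A, C⟩ is a permutation matrix group. -/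
open Matrix

/-!
Work in the basis `T`, where `C` is `diag(λ^i)` and `A` is the permutation matrix of some `σ`.
Since `C` has finite order, normality gives `A C^m = C A` for some `m : ℕ`, which compares the
diagonals entrywise: `σ i * m = i` in `ℤ/2^n`, so `σ i * j = i * σ j`. The Fourier matrix
`F = (λ^(ij))` therefore conjugates `diag(λ^i)` to a rotation and `σ`'s permutation matrix to
that of `σ⁻¹`, and conjugating by `T F` turns both generators into permutation matrices.
-/

open Equiv

section PowFinVal

variable {M : Type*} [Monoid M] {x : M} {d : ℕ}

open Fin.CommRing in
lemma pow_finVal_natCast [NeZero d] (h : x ^ d = 1) (k : ℕ) : x ^ ((k : Fin d) : ℕ) = x ^ k := by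
  rw [Fin.val_natCast, ← pow_eq_pow_mod k h]

lemma pow_finVal_add (h : x ^ d = 1) (i j : Fin d) :
    x ^ ((i + j : Fin d) : ℕ) = x ^ ((i : ℕ) + j) := by
  rw [Fin.val_add, ← pow_eq_pow_mod _ h]

lemma pow_finVal_mul (h : x ^ d = 1) (i j : Fin d) :
    x ^ ((i * j : Fin d) : ℕ) = x ^ ((i : ℕ) * j) := by
  rw [Fin.val_mul, ← pow_eq_pow_mod _ h]

end PowFinVal

lemma IsPrimitiveRoot.injective_pow_finVal {M : Type*} [CommMonoid M] {ζ : M} {d : ℕ}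
    (hζ : IsPrimitiveRoot ζ d) : Function.Injective fun i : Fin d => ζ ^ (i : ℕ) :=
  fun i j hij => Fin.ext (hζ.pow_inj i.isLt j.isLt hij)

namespace Matrix

variable {n R : Type*} [DecidableEq n] [Fintype n]

lemma permMatrix_mul_apply [NonAssocSemiring R] (σ : Perm n) (M : Matrix n n R) (i j : n) :
    (σ.permMatrix R * M) i j = M (σ i) j := by
  rw [Perm.permMatrix, PEquiv.toMatrix_toPEquiv_mul, submatrix_apply, id]

lemma mul_permMatrix_apply [NonAssocSemiring R] (σ : Perm n) (M : Matrix n n R) (i j : n) :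
    (M * σ.permMatrix R) i j = M i (σ.symm j) := by
  rw [Perm.permMatrix, PEquiv.mul_toMatrix_toPEquiv, submatrix_apply, id]

lemma permMatrix_mul_diagonal [NonAssocSemiring R] (σ : Perm n) (v : n → R) :
    σ.permMatrix R * diagonal v = diagonal (v ∘ σ) * σ.permMatrix R := by
  ext i j
  rw [permMatrix_mul_apply, diagonal_mul]
  by_cases h : σ i = j <;> simp [h]

end Matrix

section Fourier

variable {R : Type*} [CommRing R] {d : ℕ}

def fourierMatrix (ζ : R) : Matrix (Fin d) (Fin d) R :=
  of fun i j => ζ ^ ((i : ℕ) * j)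

lemma fourierMatrix_eq_vandermonde (ζ : R) :
    fourierMatrix (d := d) ζ = vandermonde fun i => ζ ^ (i : ℕ) := by
  ext i j
  rw [fourierMatrix, of_apply, vandermonde_apply, pow_mul]

lemma isUnit_fourierMatrix {K : Type*} [Field K] {ζ : K} (hζ : IsPrimitiveRoot ζ d) :
    IsUnit (fourierMatrix (d := d) ζ) := by
  rw [isUnit_iff_isUnit_det, isUnit_iff_ne_zero, fourierMatrix_eq_vandermonde,
    det_vandermonde_ne_zero_iff]
  exact hζ.injective_pow_finVal

variable {ζ : R}

lemma permMatrix_mul_fourierMatrix (hζ : ζ ^ d = 1) {σ : Perm (Fin d)}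
    (hσ : ∀ i j, σ i * j = i * σ j) :
    σ.permMatrix R * fourierMatrix ζ = fourierMatrix ζ * σ⁻¹.permMatrix R := by
  ext i j
  rw [permMatrix_mul_apply, mul_permMatrix_apply, Perm.inv_def, symm_symm, fourierMatrix,
    of_apply, of_apply, ← pow_finVal_mul hζ, ← pow_finVal_mul hζ, hσ]

open Fin.CommRing in
lemma diagonal_mul_fourierMatrix [NeZero d] (hζ : ζ ^ d = 1) :
    diagonal (fun i : Fin d => ζ ^ (i : ℕ)) * fourierMatrix ζ =
      fourierMatrix ζ * (finRotate d)⁻¹.permMatrix R := by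
  ext i j
  rw [mul_permMatrix_apply, Perm.inv_def, symm_symm, finRotate_apply, diagonal_mul,
    fourierMatrix, of_apply, of_apply, ← pow_finVal_mul hζ i (j + 1), mul_add, mul_one,
    pow_finVal_add hζ, pow_add, pow_finVal_mul hζ]
  exact mul_comm _ _

end Fourier

lemma exists_mul_pow_eq_mul_of_mem_zpowers {G : Type*} [Group G] {a c : G} (hc : IsOfFinOrder c)
    (h : a⁻¹ * c * a ∈ Subgroup.zpowers c) : ∃ m : ℕ, a * c ^ m = c * a := by
  obtain ⟨m, hm : c ^ m = a⁻¹ * c * a⟩ := hc.mem_powers_iff_mem_zpowers.2 h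
  exact ⟨m, by rw [hm]; group⟩

section Similarity

variable {n R : Type*} [Fintype n] [DecidableEq n] [CommRing R]

lemma exists_mul_pow_eq_mul_of_conj {A C : GL n R} {T : (Matrix n n R)ˣ} {P D : Matrix n n R}
    (hD : IsOfFinOrder D) (hnorm : A⁻¹ * C * A ∈ Subgroup.zpowers C)
    (hTA : T⁻¹.val * A.val * T.val = P) (hTC : T⁻¹.val * C.val * T.val = D) :
    ∃ m : ℕ, P * D ^ m = D * P := by
  let f : GL n R →* Matrix n n R := (Units.coeHom _).comp (MulAut.conj T⁻¹).toMonoidHom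
  have hf (g : GL n R) : f g = T⁻¹.val * g.val * T.val := by simp [f]
  have hf_inj : Function.Injective f := Units.val_injective.comp (MulAut.conj T⁻¹).injective
  have hC : IsOfFinOrder C := by
    rwa [← hf_inj.isOfFinOrder_iff, hf, hTC]
  obtain ⟨m, hm⟩ := exists_mul_pow_eq_mul_of_mem_zpowers hC hnorm
  refine ⟨m, ?_⟩
  have := congrArg f hm
  rwa [map_mul, map_mul, map_pow, hf, hf, hTA, hTC] at this

end Similarity

section DiagonalRootsOfUnity

variable {R : Type*} [CommRing R] {d : ℕ} {ζ : R}

lemma isOfFinOrder_diagonal_pow_finVal [NeZero d] (hζ : ζ ^ d = 1) :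
    IsOfFinOrder (diagonal fun i : Fin d => ζ ^ (i : ℕ)) := by
  refine isOfFinOrder_iff_pow_eq_one.2 ⟨d, NeZero.pos d, ?_⟩
  rw [diagonal_pow, ← diagonal_one]
  congr 1
  funext i
  rw [Pi.pow_apply, ← pow_mul, mul_comm, pow_mul, hζ, one_pow]

open Fin.CommRing in
lemma mul_natCast_eq_of_permMatrix_mul_pow [NeZero d] (hζ : IsPrimitiveRoot ζ d)
    {σ : Perm (Fin d)} {m : ℕ}
    (h : σ.permMatrix R * (diagonal fun i : Fin d => ζ ^ (i : ℕ)) ^ m =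
      (diagonal fun i : Fin d => ζ ^ (i : ℕ)) * σ.permMatrix R) (i : Fin d) :
    σ i * m = i := by
  rw [diagonal_pow, permMatrix_mul_diagonal] at h
  have hdiag := congrArg (· * σ⁻¹.permMatrix R) h
  simp only [Matrix.mul_assoc, ← permMatrix_mul, inv_mul_cancel, permMatrix_one,
    Matrix.mul_one] at hdiag
  have hi := congrFun (diagonal_injective hdiag) i
  apply hζ.injective_pow_finVal
  have hcast : σ i * (m : Fin d) = (((σ i : ℕ) * m : ℕ) : Fin d) := by
    rw [Nat.cast_mul, Fin.cast_val_eq_self]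
  show ζ ^ ((σ i * m : Fin d) : ℕ) = ζ ^ (i : ℕ)
  rw [hcast, pow_finVal_natCast hζ.pow_eq_one, pow_mul]
  exact hi

open Fin.CommRing in
lemma mul_comm_apply_of_mul_natCast_eq [NeZero d] {σ : Perm (Fin d)} {m : ℕ}
    (h : ∀ i, σ i * m = i) (i j : Fin d) : σ i * j = i * σ j := by
  linear_combination σ j * h i - σ i * h j

end DiagonalRootsOfUnity

def permMatrixSubgroup (d : ℕ) : Subgroup (GL (Fin d) ℂ) :=
  (permMatrixHom : Perm (Fin d) →* Matrix (Fin d) (Fin d) ℂ).toHomUnits.range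

lemma mem_permMatrixSubgroup {d : ℕ} {g : GL (Fin d) ℂ} :
    g ∈ permMatrixSubgroup d ↔ IsPermMatrix g.val := by
  constructor
  · rintro ⟨σ, rfl⟩
    exact ⟨σ⁻¹, rfl⟩
  · rintro ⟨σ, hσ⟩
    exact ⟨σ⁻¹, Units.ext (by rw [MonoidHom.coe_toHomUnits, permMatrixHom_apply, inv_inv, hσ])⟩

lemma isPermutationMatrixGroup_closure {d : ℕ} {s : Set (GL (Fin d) ℂ)}
    (T : (Matrix (Fin d) (Fin d) ℂ)ˣ) (hs : ∀ g ∈ s, IsPermMatrix (T⁻¹.val * g.val * T.val)) :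
    IsPermutationMatrixGroup (Subgroup.closure s) := by
  have hle : Subgroup.closure s ≤ (permMatrixSubgroup d).comap (MulAut.conj T⁻¹).toMonoidHom :=
    (Subgroup.closure_le _).2 fun g hg => mem_permMatrixSubgroup.2 (by simpa using hs g hg)
  exact ⟨T, fun g hg => by simpa using mem_permMatrixSubgroup.1 (hle hg)⟩

lemma isPermMatrix_of_mul_eq {d : ℕ} {F M : Matrix (Fin d) (Fin d) ℂ} (hF : IsUnit F)
    {σ : Perm (Fin d)} (h : M * F = F * σ.permMatrix ℂ) :
    IsPermMatrix (hF.unit⁻¹.val * M * hF.unit.val) :=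
  have hU : M * hF.unit.val = hF.unit.val * σ.permMatrix ℂ := by rwa [hF.unit_spec]
  ⟨σ, by rw [Matrix.mul_assoc, hU, ← Matrix.mul_assoc, Units.inv_mul, Matrix.one_mul]⟩

theorem perm_basis_gives_permutation_matrix_group_general
    (n : ℕ) (A C : GL (Fin (2 ^ n)) ℂ)
    (hnorm : A⁻¹ * C * A ∈ Subgroup.zpowers C)
    (lam : ℂ) (hlam : IsPrimitiveRoot lam (2 ^ n))
    (T : (Matrix (Fin (2 ^ n)) (Fin (2 ^ n)) ℂ)ˣ)
    (hTC : T⁻¹.val * C.val * T.val =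
      Matrix.diagonal (fun i : Fin (2 ^ n) => lam ^ (i : ℕ)))
    (hTA : IsPermMatrix (T⁻¹.val * A.val * T.val)) :
    IsPermutationMatrixGroup (Subgroup.closure {A, C}) := by
  have : NeZero (2 ^ n) := ⟨by positivity⟩
  obtain ⟨σ, hσ⟩ := hTA
  obtain ⟨m, hm⟩ := exists_mul_pow_eq_mul_of_conj
    (isOfFinOrder_diagonal_pow_finVal hlam.pow_eq_one) hnorm hσ hTC
  have hσ_comm := mul_comm_apply_of_mul_natCast_eq (mul_natCast_eq_of_permMatrix_mul_pow hlam hm)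
  have hF := isUnit_fourierMatrix (d := 2 ^ n) hlam
  have hconj (g : GL (Fin (2 ^ n)) ℂ) : ((T * hF.unit)⁻¹).val * g.val * (T * hF.unit).val =
      hF.unit⁻¹.val * (T⁻¹.val * g.val * T.val) * hF.unit.val := by
    simp only [_root_.mul_inv_rev, Units.val_mul, Matrix.mul_assoc]
  refine isPermutationMatrixGroup_closure (T * hF.unit) ?_
  simp only [Set.mem_insert_iff, Set.mem_singleton_iff, forall_eq_or_imp, forall_eq, hconj, hσ,
    hTC]
  exact ⟨isPermMatrix_of_mul_eq hF (permMatrix_mul_fourierMatrix hlam.pow_eq_one hσ_comm),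
    isPermMatrix_of_mul_eq hF (diagonal_mul_fourierMatrix hlam.pow_eq_one)⟩

theorem perm_basis_gives_permutation_matrix_group
    (n : ℕ) (A C : GL (Fin (2 ^ n)) ℂ)
    (hC : IsMaximalCycle C.val)
    (hnorm : A⁻¹ * C * A ∈ Subgroup.zpowers C)
    (lam : ℂ) (hlam : IsPrimitiveRoot lam (2 ^ n))
    (T : (Matrix (Fin (2 ^ n)) (Fin (2 ^ n)) ℂ)ˣ)
    (hTC : T⁻¹.val * C.val * T.val =
      Matrix.diagonal (fun i : Fin (2 ^ n) => lam ^ (i : ℕ)))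
    (hTA : IsPermMatrix (T⁻¹.val * A.val * T.val)) :
    IsPermutationMatrixGroup (Subgroup.closure {A, C}) :=
  perm_basis_gives_permutation_matrix_group_general n A C hnorm lam hlam T hTC hTA
end

section
/- Let A, C ∈ GL_{2^n}(ℂ) with C a maximal cycle, A⁻¹CA = C^r where the residue class of r has multiplicative order 2^a modulo 2^n, and A^{2^a} = I. Let λ be a primitive 2^n-th root of unity. Then one can choose a nonzero eigenvector e_j in the eigenspace E(λ^j) of C for each odd j ∈ ℤ/2^nℤ such that A permutes the set {e_j : j odd}; in particular, with respect to this basis of V*, the restriction of A to V* is a permutation matrix. -/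
open Matrix

/-- Auxiliary: the action of a permutation matrix on a vector. -/
lemma permMatrix_mulVec_aux {d : ℕ} (σ : Equiv.Perm (Fin d)) (v : Fin d → ℂ) (i : Fin d) :
    (σ.permMatrix ℂ).mulVec v i = v (σ i) := by
  simp [Equiv.Perm.permMatrix, Matrix.mulVec, dotProduct, PEquiv.toMatrix_apply,
    Equiv.toPEquiv_apply]

/-- Auxiliary: powers are periodic for roots of unity. -/
lemma pow_mod_aux {μ : ℂ} {N : ℕ} (h : μ ^ N = 1) (m : ℕ) : μ ^ (m % N) = μ ^ m := by
  conv_rhs => rw [← Nat.div_add_mod m N]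
  rw [pow_add, pow_mul, h, one_pow, one_mul]

/-- Auxiliary: eigenvectors of the cyclic rotation matrix. -/
lemma rot_eigen_aux {d : ℕ} (hd : d ≠ 0) (μ : ℂ) (hμ : μ ^ d = 1) :
    ((finRotate d).permMatrix ℂ).mulVec (fun i => μ ^ (i.val : ℕ))
      = μ • fun i : Fin d => μ ^ (i.val : ℕ) := by
  obtain ⟨m, rfl⟩ := Nat.exists_eq_succ_of_ne_zero hd
  ext i
  rw [permMatrix_mulVec_aux]
  simp only [finRotate_succ_apply, Pi.smul_apply, smul_eq_mul]
  rw [Fin.val_add_one]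
  split
  · rename_i h
    subst h
    rw [pow_zero, Fin.val_last]
    rw [← pow_succ']
    exact hμ.symm
  · rw [pow_succ]
    ring

theorem perm_basis_on_odd_eigenspaces
    (n a : ℕ) (A C : GL (Fin (2 ^ n)) ℂ)
    (hC : IsMaximalCycle C.val)
    (r : ℕ) (hconj : A⁻¹ * C * A = C ^ r)
    (hr : orderOf ((r : ZMod (2 ^ n))) = 2 ^ a)
    (hA : A ^ (2 ^ a) = 1)
    (lam : ℂ) (hlam : IsPrimitiveRoot lam (2 ^ n)) :
    ∃ e : ZMod (2 ^ n) → (Fin (2 ^ n) → ℂ),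
      (∀ j : ZMod (2 ^ n), Odd j.val →
        e j ≠ 0 ∧ Matrix.mulVec C.val (e j) = lam ^ j.val • e j) ∧
      (∀ j : ZMod (2 ^ n), Odd j.val →
        ∃ i : ZMod (2 ^ n), Odd i.val ∧ Matrix.mulVec A.val (e j) = e i) := by
  classical
  have hN0 : 0 < 2 ^ n := Nat.two_pow_pos n
  haveI : NeZero (2 ^ n) := ⟨hN0.ne'⟩
  have hlamN : lam ^ (2 ^ n) = 1 := hlam.pow_eq_one
  obtain ⟨T, hT⟩ := hC
  have hCT : C.val * T.val = T.val * ((finRotate (2 ^ n)).permMatrix ℂ) := by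
    calc C.val * T.val = T.val * (T⁻¹.val * C.val * T.val) := by
          rw [← mul_assoc, ← mul_assoc, T.mul_inv, one_mul]
      _ = _ := by rw [hT]
  -- basic eigenvectors
  set w : ZMod (2 ^ n) → (Fin (2 ^ n) → ℂ) :=
    fun j => T.val.mulVec (fun i => (lam ^ j.val) ^ (i.val : ℕ)) with hw
  have hw_eig : ∀ j : ZMod (2 ^ n), C.val.mulVec (w j) = lam ^ j.val • w j := by
    intro j
    have hμ : (lam ^ j.val) ^ (2 ^ n) = 1 := by
      rw [← pow_mul, mul_comm, pow_mul, hlamN, one_pow]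
    rw [hw]
    simp only
    rw [Matrix.mulVec_mulVec, hCT, ← Matrix.mulVec_mulVec,
      rot_eigen_aux hN0.ne' _ hμ, Matrix.mulVec_smul]
  have hw_ne : ∀ j : ZMod (2 ^ n), w j ≠ 0 := by
    intro j h
    have h0 : (fun i : Fin (2 ^ n) => (lam ^ j.val) ^ (i.val : ℕ)) = 0 := by
      have h2 := congrArg (T⁻¹.val.mulVec) h
      rwa [Matrix.mulVec_mulVec, T.inv_mul, Matrix.one_mulVec, Matrix.mulVec_zero] at h2
    have := congrFun h0 ⟨0, hN0⟩
    simp at this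
  -- conjugation relation on matrices
  have hCA : C.val * A.val = A.val * (C.val ^ r) := by
    have h1 : C * A = A * C ^ r := by
      calc C * A = A * (A⁻¹ * C * A) := by group
        _ = A * C ^ r := by rw [hconj]
    have h2 := congrArg Units.val h1
    simpa [Units.val_mul] using h2
  have hpow_eig : ∀ (k : ℕ) (μ : ℂ) (v : Fin (2 ^ n) → ℂ), C.val.mulVec v = μ • v →
      (C.val ^ k).mulVec v = μ ^ k • v := by
    intro k μ v hv
    induction k with
    | zero => simp
    | succ k ih =>
        rw [pow_succ', ← Matrix.mulVec_mulVec, ih, Matrix.mulVec_smul, hv,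
          smul_smul, ← pow_succ]
  have hlam_mod : ∀ m : ℕ, lam ^ ((m : ZMod (2 ^ n)).val) = lam ^ m := by
    intro m; rw [ZMod.val_natCast]; exact pow_mod_aux hlamN m
  have hA_ne : ∀ v : Fin (2 ^ n) → ℂ, v ≠ 0 → A.val.mulVec v ≠ 0 := by
    intro v hv h
    apply hv
    have h2 := congrArg (A⁻¹.val.mulVec) h
    rwa [Matrix.mulVec_mulVec, A.inv_mul, Matrix.one_mulVec, Matrix.mulVec_zero] at h2
  have hstep : ∀ (m : ZMod (2 ^ n)) (v : Fin (2 ^ n) → ℂ),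
      C.val.mulVec v = lam ^ m.val • v →
      C.val.mulVec (A.val.mulVec v)
        = lam ^ (((r : ZMod (2 ^ n)) * m).val) • (A.val.mulVec v) := by
    intro m v hv
    have h1 : C.val.mulVec (A.val.mulVec v) = (lam ^ m.val) ^ r • (A.val.mulVec v) := by
      rw [Matrix.mulVec_mulVec, hCA, ← Matrix.mulVec_mulVec, hpow_eig r _ v hv,
        Matrix.mulVec_smul]
    rw [h1, ← pow_mul]
    congr 1
    have hcast : (r : ZMod (2 ^ n)) * m = ((r * m.val : ℕ) : ZMod (2 ^ n)) := by
      rw [Nat.cast_mul, ZMod.natCast_val, ZMod.cast_id]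
    rw [hcast, hlam_mod, mul_comm]
  -- iterated action
  have hiter : ∀ (k : ℕ) (m : ZMod (2 ^ n)),
      (A ^ k).val.mulVec (w m) ≠ 0 ∧
      C.val.mulVec ((A ^ k).val.mulVec (w m)) =
        lam ^ (((r : ZMod (2 ^ n)) ^ k * m).val) • ((A ^ k).val.mulVec (w m)) := by
    intro k m
    induction k with
    | zero =>
        refine ⟨by simpa [Matrix.one_mulVec] using hw_ne m, ?_⟩
        simpa [Matrix.one_mulVec] using hw_eig m
    | succ k ih =>
        have hval : (A ^ (k + 1)).val = A.val * (A ^ k).val := by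
          rw [pow_succ']; rfl
        constructor
        · rw [hval, ← Matrix.mulVec_mulVec]; exact hA_ne _ ih.1
        · rw [hval, ← Matrix.mulVec_mulVec]
          have h2 := hstep ((r : ZMod (2 ^ n)) ^ k * m) _ ih.2
          rw [h2]
          congr 2
          rw [pow_succ', mul_assoc]
  -- r is a unit of order 2^a
  have hr2a : ((r : ZMod (2 ^ n))) ^ (2 ^ a) = 1 := by
    rw [← hr]; exact pow_orderOf_eq_one _
  have hrU : IsUnit ((r : ZMod (2 ^ n))) := IsUnit.of_pow_eq_one hr2a (Nat.two_pow_pos a).ne'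
  have hApow : ∀ k1 k2 : ℕ,
      ((r : ZMod (2 ^ n))) ^ k1 = ((r : ZMod (2 ^ n))) ^ k2 → A ^ k1 = A ^ k2 := by
    have main : ∀ k1 k2 : ℕ, k1 ≤ k2 →
        ((r : ZMod (2 ^ n))) ^ k1 = ((r : ZMod (2 ^ n))) ^ k2 → A ^ k1 = A ^ k2 := by
      intro k1 k2 hle heq
      set u := hrU.unit with hu_def
      have hu : (u : ZMod (2 ^ n)) = (r : ZMod (2 ^ n)) := hrU.unit_spec
      have hueq : u ^ k1 = u ^ k2 := by
        apply Units.ext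
        rw [Units.val_pow_eq_pow_val, Units.val_pow_eq_pow_val, hu]
        exact heq
      have hone : u ^ (k2 - k1) = 1 := by
        have h3 : u ^ k1 * u ^ (k2 - k1) = u ^ k1 * 1 := by
          rw [← pow_add, Nat.add_sub_cancel' hle, mul_one, hueq]
        exact mul_left_cancel h3
      have ho : orderOf u = 2 ^ a := by
        rw [← orderOf_units, hu]; exact hr
      have hdvd : 2 ^ a ∣ k2 - k1 := ho ▸ orderOf_dvd_of_pow_eq_one hone
      obtain ⟨t, ht⟩ := hdvd
      have h4 : A ^ k2 = A ^ k1 * (A ^ (2 ^ a)) ^ t := by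
        rw [← pow_mul, ← pow_add, ← ht, Nat.add_sub_cancel' hle]
      rw [h4, hA, one_pow, mul_one]
    intro k1 k2 h
    rcases le_total k1 k2 with h' | h'
    · exact main _ _ h' h
    · exact (main _ _ h' h.symm).symm
  -- oddness and units
  have hodd_unit : ∀ j : ZMod (2 ^ n), Odd j.val → IsUnit j := by
    intro j hj
    have h1 : Nat.Coprime j.val 2 := Nat.coprime_two_right.mpr hj
    have h2 : Nat.Coprime j.val (2 ^ n) := Nat.Coprime.pow_right _ h1
    have h3 := (ZMod.isUnit_iff_coprime j.val (2 ^ n)).mpr h2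
    rwa [ZMod.natCast_val, ZMod.cast_id] at h3
  have hn_pos : ∀ j : ZMod (2 ^ n), Odd j.val → 0 < n := by
    intro j hj
    rcases Nat.eq_zero_or_pos n with h | h
    · exfalso
      have hlt : j.val < 1 := lt_of_lt_of_eq (ZMod.val_lt j) (by rw [h, pow_zero])
      obtain ⟨c, hc⟩ := hj
      omega
    · exact h
  have hunit_odd : ∀ j : ZMod (2 ^ n), 0 < n → IsUnit j → Odd j.val := by
    intro j hn hu
    have h1 : IsUnit ((j.val : ℕ) : ZMod (2 ^ n)) := by
      rwa [ZMod.natCast_val, ZMod.cast_id]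
    have h2 : Nat.Coprime j.val (2 ^ n) := (ZMod.isUnit_iff_coprime j.val (2 ^ n)).mp h1
    have h3 : Nat.Coprime j.val 2 := (Nat.coprime_pow_right_iff hn _ _).mp h2
    exact Nat.coprime_two_right.mp h3
  -- the orbit equivalence relation
  have hequiv : Equivalence
      (fun x y : ZMod (2 ^ n) => ∃ k : ℕ, (r : ZMod (2 ^ n)) ^ k * x = y) := by
    constructor
    · intro x; exact ⟨0, by simp⟩
    · rintro x y ⟨k, rfl⟩
      refine ⟨k * (2 ^ a - 1), ?_⟩
      rw [← mul_assoc, ← pow_add]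
      have h1 : (1 : ℕ) ≤ 2 ^ a := Nat.one_le_two_pow
      have h2 : k * (2 ^ a - 1) + k = 2 ^ a * k := by
        calc k * (2 ^ a - 1) + k = k * (2 ^ a - 1 + 1) := by ring
          _ = _ := by rw [Nat.sub_add_cancel h1]; ring
      rw [h2, pow_mul, hr2a, one_pow, one_mul]
    · rintro x y z ⟨k1, rfl⟩ ⟨k2, rfl⟩
      exact ⟨k2 + k1, by rw [pow_add, mul_assoc]⟩
  set s : Setoid (ZMod (2 ^ n)) := ⟨_, hequiv⟩ with hs
  set rep : ZMod (2 ^ n) → ZMod (2 ^ n) := fun j => (Quotient.mk s j).out with hrep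
  have hrep_rel : ∀ j, ∃ k : ℕ, (r : ZMod (2 ^ n)) ^ k * rep j = j :=
    fun j => Quotient.mk_out (s := s) j
  have hrep_eq : ∀ j : ZMod (2 ^ n), rep ((r : ZMod (2 ^ n)) * j) = rep j := by
    intro j
    have hrel : Quotient.mk s j = Quotient.mk s ((r : ZMod (2 ^ n)) * j) :=
      Quotient.sound (⟨1, by rw [pow_one]⟩ :
        (fun x y : ZMod (2 ^ n) => ∃ k : ℕ, (r : ZMod (2 ^ n)) ^ k * x = y) j _)
    rw [hrep]
    simp only
    rw [← hrel]
  set kf : ZMod (2 ^ n) → ℕ := fun j => (hrep_rel j).choose with hkf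
  have hrep_spec : ∀ j, (r : ZMod (2 ^ n)) ^ (kf j) * rep j = j :=
    fun j => (hrep_rel j).choose_spec
  refine ⟨fun j => (A ^ kf j).val.mulVec (w (rep j)), ?_, ?_⟩
  · intro j hj
    obtain ⟨hne, heig⟩ := hiter (kf j) (rep j)
    refine ⟨hne, ?_⟩
    rwa [hrep_spec j] at heig
  · intro j hj
    have hnpos : 0 < n := hn_pos j hj
    refine ⟨(r : ZMod (2 ^ n)) * j, ?_, ?_⟩
    · exact hunit_odd _ hnpos (hrU.mul (hodd_unit j hj))
    · have h1 : rep ((r : ZMod (2 ^ n)) * j) = rep j := hrep_eq j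
      have hrepU : IsUnit (rep j) := by
        obtain ⟨k, hk⟩ := hrep_rel j
        have h5 : IsUnit ((r : ZMod (2 ^ n)) ^ k * rep j) := by
          rw [hk]; exact hodd_unit j hj
        exact isUnit_of_mul_isUnit_right h5
      have h2 : (r : ZMod (2 ^ n)) ^ (kf ((r : ZMod (2 ^ n)) * j))
          = (r : ZMod (2 ^ n)) ^ (kf j + 1) := by
        apply hrepU.mul_right_cancel
        have ha := hrep_spec ((r : ZMod (2 ^ n)) * j)
        rw [h1] at ha
        rw [ha, pow_succ', mul_assoc, hrep_spec j]
      have h3 : A ^ (kf ((r : ZMod (2 ^ n)) * j)) = A ^ (kf j + 1) := hApow _ _ h2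
      show A.val.mulVec ((A ^ kf j).val.mulVec (w (rep j)))
          = (A ^ kf ((r : ZMod (2 ^ n)) * j)).val.mulVec (w (rep ((r : ZMod (2 ^ n)) * j)))
      rw [h1, h3, Matrix.mulVec_mulVec]
      rw [pow_succ']
      rfl
end

section
/- Let n and a be integers with 1 ≤ a ≤ n−2 and let r be the residue class of 1 + 2^{n−a} in ℤ/2^nℤ. Then for every j ∈ ℤ/2^nℤ, the element −j lies in the orbit of j under multiplication by r (i.e., there exists an integer i ≥ 0 with r^i·j = −j in ℤ/2^nℤ) if and only if j = 0 or j = 2^{n−1}. Consequently, the orbits of multiplication by r on ℤ/2^nℤ \ {0, 2^{n−1}} come in pairs Γ, −Γ with Γ ∩ (−Γ) = ∅. -/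
theorem orbits_of_mul_one_plus_two_pow_pair_up
    (n a : ℕ) (ha1 : 1 ≤ a) (han : a + 2 ≤ n)
    (r : ZMod (2 ^ n)) (hr : r = 1 + 2 ^ (n - a)) :
    (∀ j : ZMod (2 ^ n),
      (∃ i : ℕ, r ^ i * j = -j) ↔ (j = 0 ∨ j = 2 ^ (n - 1))) ∧
    (∀ j : ZMod (2 ^ n), j ≠ 0 → j ≠ 2 ^ (n - 1) →
      ∀ i i' : ℕ, r ^ i * j ≠ -(r ^ i' * j)) := by
  haveI : NeZero (2 ^ n) := ⟨pow_ne_zero _ two_ne_zero⟩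
  have hn1 : 1 ≤ n := by omega
  have hna2 : 2 ≤ n - a := by omega
  have h2nil : IsNilpotent (2 : ZMod (2 ^ n)) := ⟨n, by
    rw [show ((2 : ZMod (2^n))^n) = ((2^n : ℕ) : ZMod (2^n)) by push_cast; ring,
      ZMod.natCast_self]⟩
  have hnilmul : ∀ x : ZMod (2 ^ n), IsNilpotent (2 * x) := by
    intro x
    obtain ⟨k, hk⟩ := h2nil
    exact ⟨k, by rw [mul_pow, hk, zero_mul]⟩
  -- characterization of 2-torsion
  have htor : ∀ j : ZMod (2 ^ n), 2 * j = 0 ↔ (j = 0 ∨ j = 2 ^ (n - 1)) := by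
    intro j
    constructor
    · intro h
      have hj : ((j.val : ℕ) : ZMod (2 ^ n)) = j := by
        simp [ZMod.natCast_val, ZMod.cast_id]
      have h2 : ((2 * j.val : ℕ) : ZMod (2 ^ n)) = 0 := by
        push_cast; rw [hj]; exact h
      have hdvd : 2 ^ n ∣ 2 * j.val := (ZMod.natCast_eq_zero_iff _ _).mp h2
      have hdvd' : 2 ^ (n - 1) ∣ j.val := by
        have : 2 * 2 ^ (n - 1) ∣ 2 * j.val := by
          rwa [show 2 * 2 ^ (n - 1) = 2 ^ n by
            rw [← pow_succ']; congr 1; omega]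
        exact (mul_dvd_mul_iff_left (two_ne_zero)).mp this
      obtain ⟨k, hk⟩ := hdvd'
      have hlt : j.val < 2 ^ n := ZMod.val_lt j
      have hk2 : k < 2 := by
        by_contra hc
        push_neg at hc
        have : 2 ^ n ≤ 2 ^ (n - 1) * k := by
          calc 2 ^ n = 2 ^ (n-1) * 2 := by rw [mul_comm, ← pow_succ']; congr 1; omega
          _ ≤ 2 ^ (n-1) * k := by exact Nat.mul_le_mul_left _ hc
        omega
      interval_cases k
      · left
        rw [← hj, hk]; simp
      · right
        rw [← hj, hk]; push_cast; ring
    · rintro (rfl | rfl)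
      · ring
      · rw [show (2 : ZMod (2^n)) * 2 ^ (n-1) = 2 ^ (n - 1 + 1) by rw [pow_succ]; ring,
          show n - 1 + 1 = n by omega,
          show ((2 : ZMod (2^n))^n) = ((2^n : ℕ) : ZMod (2^n)) by push_cast; ring,
          ZMod.natCast_self]
  -- main iff
  have hmain : ∀ j : ZMod (2 ^ n),
      (∃ i : ℕ, r ^ i * j = -j) ↔ (j = 0 ∨ j = 2 ^ (n - 1)) := by
    intro j
    constructor
    · rintro ⟨i, hi⟩
      obtain ⟨s, hs⟩ : (r - 1) ∣ r ^ i - 1 := by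
        simpa using sub_dvd_pow_sub_pow r 1 i
      obtain ⟨m, hm⟩ : ∃ m, n - a = m + 2 := ⟨n - a - 2, by omega⟩
      have hr1 : r - 1 = 2 * (2 * 2 ^ m) := by
        rw [hr, hm, pow_succ, pow_succ]; ring
      set w : ZMod (2 ^ n) := 1 + 2 * (2 ^ m * s) with hw
      have hri : r ^ i + 1 = 2 * w := by
        have : r ^ i = 1 + (r - 1) * s := by rw [← hs]; ring
        rw [this, hr1, hw]; ring
      have hwu : IsUnit w := (hnilmul _).isUnit_one_add
      have h0 : (r ^ i + 1) * j = 0 := by rw [add_mul, one_mul, hi]; ring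
      rw [hri] at h0
      have h2j : 2 * j = 0 := by
        have : w * (2 * j) = 0 := by rw [← h0]; ring
        exact (hwu.mul_right_eq_zero).mp this
      exact (htor j).mp h2j
    · intro h
      exact ⟨0, by rw [pow_zero, one_mul, eq_neg_iff_add_eq_zero, ← two_mul,
        (htor j).mpr h]⟩
  refine ⟨hmain, ?_⟩
  intro j h0 h1 i i' heq
  have hru : IsUnit r := by
    rw [hr, show ((2 : ZMod (2^n)) ^ (n - a)) = 2 * 2 ^ (n - a - 1) by
      rw [← pow_succ']; congr 1; omega]
    exact (hnilmul _).isUnit_one_add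
  have hnot : ¬ (j = 0 ∨ j = 2 ^ (n - 1)) := by tauto
  rcases le_total i i' with h | h
  · obtain ⟨k, rfl⟩ := Nat.exists_eq_add_of_le h
    have : r ^ i * (j + r ^ k * j) = 0 := by
      rw [pow_add] at heq
      linear_combination heq
    have h2 : j + r ^ k * j = 0 := ((hru.pow i).mul_right_eq_zero).mp this
    exact hnot ((hmain j).mp ⟨k, by linear_combination h2⟩)
  · obtain ⟨k, rfl⟩ := Nat.exists_eq_add_of_le h
    have : r ^ i' * (r ^ k * j + j) = 0 := by
      rw [pow_add] at heq
      linear_combination heq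
    have h2 : r ^ k * j + j = 0 := ((hru.pow i').mul_right_eq_zero).mp this
    exact hnot ((hmain j).mp ⟨k, by linear_combination h2⟩)
end
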